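/- arXiv:1705.01295 — 7 statements merged into one kernel-verified Lean document; each statement's English description precedes it below -/
import Mathlib

section
/- Let X ∈ ℝ^p, Y ∈ ℝ^q with X ⊥ 1_p, Y ⊥ 1_q, and suppose A·X = a·X, C·Y = c₀·Y, B·Y = b·X, Bᵀ·X = b·Y. Then for λ = (a + c₀ + √((a−c₀)² + 4b²))/2, the block vector x = (k·X, Y, 0_r, 0_s), where k = b/(λ − a) (assuming λ ≠ a), is an eigenvector of the block matrix 𝒟 = [[A, B, cJ_{p×r}, 0],[Bᵀ, C, 0, cJ_{q×s}],[cJ_{r×p}, 0, D, 0],[0, cJ_{s×q}, 0, E]] with eigenvalue λ. -/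
open Matrix

/-- The double join block matrix
`[[A, B, cJ, 0], [Bᵀ, C, 0, cJ], [cJ, 0, D, 0], [0, cJ, 0, E]]`. -/
def doubleJoinMatrix {p q r s : ℕ}
    (A : Matrix (Fin p) (Fin p) ℝ) (B : Matrix (Fin p) (Fin q) ℝ)
    (C : Matrix (Fin q) (Fin q) ℝ) (D : Matrix (Fin r) (Fin r) ℝ)
    (E : Matrix (Fin s) (Fin s) ℝ) (c : ℝ) :
    Matrix (Fin p ⊕ (Fin q ⊕ (Fin r ⊕ Fin s))) (Fin p ⊕ (Fin q ⊕ (Fin r ⊕ Fin s))) ℝ :=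
  Matrix.of fun i j =>
    match i, j with
    | .inl i, .inl j => A i j
    | .inl i, .inr (.inl j) => B i j
    | .inl _, .inr (.inr (.inl _)) => c
    | .inl _, .inr (.inr (.inr _)) => 0
    | .inr (.inl i), .inl j => B j i
    | .inr (.inl i), .inr (.inl j) => C i j
    | .inr (.inl _), .inr (.inr (.inl _)) => 0
    | .inr (.inl _), .inr (.inr (.inr _)) => c
    | .inr (.inr (.inl _)), .inl _ => c
    | .inr (.inr (.inl _)), .inr (.inl _) => 0
    | .inr (.inr (.inl i)), .inr (.inr (.inl j)) => D i j
    | .inr (.inr (.inl _)), .inr (.inr (.inr _)) => 0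
    | .inr (.inr (.inr _)), .inl _ => 0
    | .inr (.inr (.inr _)), .inr (.inl _) => c
    | .inr (.inr (.inr _)), .inr (.inr (.inl _)) => 0
    | .inr (.inr (.inr i)), .inr (.inr (.inr j)) => E i j

theorem stmt_2 {p q r s : ℕ}
    (A : Matrix (Fin p) (Fin p) ℝ) (B : Matrix (Fin p) (Fin q) ℝ)
    (C : Matrix (Fin q) (Fin q) ℝ) (D : Matrix (Fin r) (Fin r) ℝ)
    (E : Matrix (Fin s) (Fin s) ℝ) (c : ℝ)
    (X : Fin p → ℝ) (Y : Fin q → ℝ) (a b c₀ : ℝ)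
    (hX0 : X ≠ 0) (hY0 : Y ≠ 0)
    (hXorth : ∑ i, X i = 0) (hYorth : ∑ i, Y i = 0)
    (hAX : A *ᵥ X = a • X) (hCY : C *ᵥ Y = c₀ • Y)
    (hBY : B *ᵥ Y = b • X) (hBTX : Bᵀ *ᵥ X = b • Y)
    (lam : ℝ) (hlam : lam = (a + c₀ + Real.sqrt ((a - c₀) ^ 2 + 4 * b ^ 2)) / 2)
    (hla : lam ≠ a) :
    (Sum.elim ((b / (lam - a)) • X) (Sum.elim Y (Sum.elim (0 : Fin r → ℝ) (0 : Fin s → ℝ))) ≠ 0) ∧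
      doubleJoinMatrix A B C D E c *ᵥ
        Sum.elim ((b / (lam - a)) • X) (Sum.elim Y (Sum.elim (0 : Fin r → ℝ) (0 : Fin s → ℝ))) =
      lam • Sum.elim ((b / (lam - a)) • X) (Sum.elim Y (Sum.elim (0 : Fin r → ℝ) (0 : Fin s → ℝ))) := by
  have hΔ : Real.sqrt ((a - c₀) ^ 2 + 4 * b ^ 2) ^ 2 = (a - c₀) ^ 2 + 4 * b ^ 2 :=
    Real.sq_sqrt (by positivity)
  have hkey : b ^ 2 = (lam - a) * (lam - c₀) := by
    subst hlam; nlinarith [hΔ]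
  have hne : lam - a ≠ 0 := sub_ne_zero.mpr hla
  have hkb : b / (lam - a) * (lam - a) = b := div_mul_cancel₀ b hne
  constructor
  · intro h
    apply hY0
    funext i
    have := congrFun h (Sum.inr (Sum.inl i))
    simpa using this
  · funext i
    rcases i with i | i | i | i
    · have hA := congrFun hAX i
      have hB := congrFun hBY i
      simp [mulVec, dotProduct, smul_eq_mul] at hA hB ⊢
      simp only [doubleJoinMatrix, of_apply, Fintype.sum_sum_type, mul_zero, mul_comm,
        Finset.sum_const_zero, add_zero]
      have e1 : ∑ x : Fin p, A i x * (X x * (b / (lam - a)))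
          = (∑ x : Fin p, A i x * X x) * (b / (lam - a)) := by
        rw [Finset.sum_mul]; exact Finset.sum_congr rfl fun x _ => by ring
      rw [e1, hA, hB]
      field_simp
      ring
    · have hC := congrFun hCY i
      have hB := congrFun hBTX i
      simp [mulVec, dotProduct, smul_eq_mul, transpose_apply] at hC hB ⊢
      simp only [doubleJoinMatrix, of_apply, Fintype.sum_sum_type, mul_zero, mul_comm,
        Finset.sum_const_zero, add_zero]
      have e1 : ∑ x : Fin p, B x i * (X x * (b / (lam - a)))
          = (∑ x : Fin p, B x i * X x) * (b / (lam - a)) := by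
        rw [Finset.sum_mul]; exact Finset.sum_congr rfl fun x _ => by ring
      rw [e1, hB, hC]
      field_simp
      linear_combination Y i * hkey
    · simp only [doubleJoinMatrix, mulVec, dotProduct, of_apply, Fintype.sum_sum_type,
        Sum.elim_inl, Sum.elim_inr, Pi.smul_apply, smul_eq_mul, Pi.zero_apply, mul_zero,
        Finset.sum_const_zero, add_zero, zero_add]
      have e1 : ∑ x : Fin p, c * (b / (lam - a) * X x)
          = (c * (b / (lam - a))) * ∑ x : Fin p, X x := by
        rw [Finset.mul_sum]; exact Finset.sum_congr rfl fun x _ => by ring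
      simp [e1, hXorth]
    · simp only [doubleJoinMatrix, mulVec, dotProduct, of_apply, Fintype.sum_sum_type,
        Sum.elim_inl, Sum.elim_inr, Pi.smul_apply, smul_eq_mul, Pi.zero_apply, mul_zero,
        Finset.sum_const_zero, add_zero, zero_add, zero_mul]
      simp [← Finset.mul_sum, hYorth]
end

section
/- Let X ∈ ℝ^p, Y ∈ ℝ^q with X ⊥ 1_p, Y ⊥ 1_q, A·X = a·X, C·Y = c₀·Y, B·Y = b·X, Bᵀ·X = b·Y, and let λ be any root of λ² − (a + c₀)λ + (a·c₀ − b²) = 0 with λ ≠ a. Then x = ((b/(λ−a))·X, Y, 0_r, 0_s) is an eigenvector of the block matrix 𝒟 (as above) with eigenvalue λ. -/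
open Matrix

theorem stmt_3 {p q r s : ℕ}
    (A : Matrix (Fin p) (Fin p) ℝ) (B : Matrix (Fin p) (Fin q) ℝ)
    (C : Matrix (Fin q) (Fin q) ℝ) (D : Matrix (Fin r) (Fin r) ℝ)
    (E : Matrix (Fin s) (Fin s) ℝ) (c : ℝ)
    (X : Fin p → ℝ) (Y : Fin q → ℝ) (a b c₀ : ℝ)
    (hX0 : X ≠ 0) (hY0 : Y ≠ 0)
    (hXorth : ∑ i, X i = 0) (hYorth : ∑ i, Y i = 0)
    (hAX : A *ᵥ X = a • X) (hCY : C *ᵥ Y = c₀ • Y)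
    (hBY : B *ᵥ Y = b • X) (hBTX : Bᵀ *ᵥ X = b • Y)
    (lam : ℝ) (hroot : lam ^ 2 - (a + c₀) * lam + (a * c₀ - b ^ 2) = 0)
    (hla : lam ≠ a) :
    (Sum.elim ((b / (lam - a)) • X) (Sum.elim Y (Sum.elim (0 : Fin r → ℝ) (0 : Fin s → ℝ))) ≠ 0) ∧
      doubleJoinMatrix A B C D E c *ᵥ
        Sum.elim ((b / (lam - a)) • X) (Sum.elim Y (Sum.elim (0 : Fin r → ℝ) (0 : Fin s → ℝ))) =
      lam • Sum.elim ((b / (lam - a)) • X) (Sum.elim Y (Sum.elim (0 : Fin r → ℝ) (0 : Fin s → ℝ))) := by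

  set k := b / (lam - a) with hk
  have hla' : lam - a ≠ 0 := sub_ne_zero.mpr hla
  have hkb : k * (lam - a) = b := div_mul_cancel₀ b hla'
  constructor
  · intro h
    apply hY0
    funext j
    have := congrFun h (Sum.inr (Sum.inl j))
    simpa using this
  · funext i
    have hAXf := fun i => congrFun hAX i
    have hCYf := fun i => congrFun hCY i
    have hBYf := fun i => congrFun hBY i
    have hBTXf := fun i => congrFun hBTX i
    simp only [mulVec, dotProduct, transpose_apply, Pi.smul_apply, smul_eq_mul] at hAXf hCYf hBYf hBTXf
    cases i with
    | inl i =>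
        simp only [mulVec, dotProduct, doubleJoinMatrix, Matrix.of_apply,
          Fintype.sum_sum_type, Sum.elim_inl, Sum.elim_inr, Pi.smul_apply,
          Pi.zero_apply, smul_eq_mul, mul_zero, Finset.sum_const_zero, add_zero]
        have h1 : ∑ j, A i j * (k * X j) = k * (a * X i) := by
          rw [← hAXf i, Finset.mul_sum]; congr 1; funext j; ring
        rw [h1, hBYf i]
        have : k * (a * X i) + b * X i = lam * (k * X i) := by
          have : b = k * (lam - a) := hkb.symm
          rw [this]; ring
        linarith [this]
    | inr i =>
      cases i with
      | inl i =>
          simp only [mulVec, dotProduct, doubleJoinMatrix, Matrix.of_apply,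
            Fintype.sum_sum_type, Sum.elim_inl, Sum.elim_inr, Pi.smul_apply,
            Pi.zero_apply, smul_eq_mul, mul_zero, Finset.sum_const_zero, add_zero]
          have h1 : ∑ j, B j i * (k * X j) = k * (b * Y i) := by
            rw [← hBTXf i, Finset.mul_sum]; congr 1; funext j; ring
          rw [h1, hCYf i]
          have hb2 : (lam - a) * (lam - c₀) = b ^ 2 := by nlinarith [hroot]
          have : k * b = lam - c₀ := by
            field_simp [hk]
            apply mul_right_cancel₀ hla'
            linear_combination b * hkb - hb2
          linear_combination Y i * this
      | inr i =>
        cases i with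
        | inl i =>
            simp only [mulVec, dotProduct, doubleJoinMatrix, Matrix.of_apply,
              Fintype.sum_sum_type, Sum.elim_inl, Sum.elim_inr, Pi.smul_apply,
              Pi.zero_apply, smul_eq_mul, mul_zero, Finset.sum_const_zero, add_zero, zero_add]
            simp [← Finset.mul_sum, hXorth, hYorth]
        | inr i =>
            simp only [mulVec, dotProduct, doubleJoinMatrix, Matrix.of_apply,
              Fintype.sum_sum_type, Sum.elim_inl, Sum.elim_inr, Pi.smul_apply,
              Pi.zero_apply, smul_eq_mul, mul_zero, Finset.sum_const_zero, add_zero, zero_add]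
            simp [← Finset.mul_sum, hXorth, hYorth]
end

section
/- Let G be a k-regular connected graph with n vertices and m edges, and let G₁, G₂ be graphs on n₁, n₂ vertices. If μ is a Laplacian eigenvalue of G₁ with eigenvector Z orthogonal to 1_{n₁}, then μ + n is a Laplacian eigenvalue of the subdivision double join G^S∨(G₁•, G₂∘), with eigenvector supported on the copy of G₁ equal to Z and zero elsewhere. -/
open Matrix SimpleGraph

/-- The vertex–edge incidence matrix of `G`, indexed by vertices and edges. -/
def edgeIncMatrix {V : Type*} [DecidableEq V] (G : SimpleGraph V) :
    Matrix V G.edgeSet ℝ :=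
  Matrix.of fun v e => if v ∈ (e : Sym2 V) then 1 else 0

/-- The Laplacian matrix over `ℝ` (with classical decidability of adjacency). -/
noncomputable def lapR {W : Type*} [Fintype W] [DecidableEq W] (H : SimpleGraph W) :
    Matrix W W ℝ :=
  letI := Classical.decRel H.Adj
  H.lapMatrix ℝ

/-- One-directional description of the adjacencies of the double join of `G`, `G₁`, `G₂`:
vertices of `G`, then the edge-vertices of `G` (one new vertex per edge), then `G₁`, then `G₂`.
Each vertex of `G` is joined to each edge-vertex of an incident edge, to all of `G₁`;
each edge-vertex is joined to all of `G₂`.  If `useOrig` then the original edges of `G` are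
kept, and if `useLine` then edge-vertices of incident edges are joined (line graph edges). -/
def djRel {V V₁ V₂ : Type*} (G : SimpleGraph V) (G₁ : SimpleGraph V₁) (G₂ : SimpleGraph V₂)
    (useOrig useLine : Prop) :
    (V ⊕ (G.edgeSet ⊕ (V₁ ⊕ V₂))) → (V ⊕ (G.edgeSet ⊕ (V₁ ⊕ V₂))) → Prop
  | Sum.inl u, Sum.inl v => useOrig ∧ G.Adj u v
  | Sum.inl v, Sum.inr (Sum.inl e) => v ∈ (e : Sym2 V)
  | Sum.inl _, Sum.inr (Sum.inr (Sum.inl _)) => True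
  | Sum.inr (Sum.inl e), Sum.inr (Sum.inl f) =>
      useLine ∧ ∃ v, v ∈ (e : Sym2 V) ∧ v ∈ (f : Sym2 V)
  | Sum.inr (Sum.inl _), Sum.inr (Sum.inr (Sum.inr _)) => True
  | Sum.inr (Sum.inr (Sum.inl u)), Sum.inr (Sum.inr (Sum.inl w)) => G₁.Adj u w
  | Sum.inr (Sum.inr (Sum.inr u)), Sum.inr (Sum.inr (Sum.inr w)) => G₂.Adj u w
  | _, _ => False

/-- The generic double join graph. -/
def doubleJoin {V V₁ V₂ : Type*} (G : SimpleGraph V) (G₁ : SimpleGraph V₁)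
    (G₂ : SimpleGraph V₂) (useOrig useLine : Prop) :
    SimpleGraph (V ⊕ (G.edgeSet ⊕ (V₁ ⊕ V₂))) :=
  SimpleGraph.fromRel (djRel G G₁ G₂ useOrig useLine)

/-- The subdivision double join `G^S ∨ (G₁•, G₂∘)`. -/
def subdivisionDoubleJoin {V V₁ V₂ : Type*} (G : SimpleGraph V) (G₁ : SimpleGraph V₁)
    (G₂ : SimpleGraph V₂) : SimpleGraph (V ⊕ (G.edgeSet ⊕ (V₁ ⊕ V₂))) :=
  doubleJoin G G₁ G₂ False False

/-- The `Q`-graph double join `G^Q ∨ (G₁•, G₂∘)`. -/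
def qDoubleJoin {V V₁ V₂ : Type*} (G : SimpleGraph V) (G₁ : SimpleGraph V₁)
    (G₂ : SimpleGraph V₂) : SimpleGraph (V ⊕ (G.edgeSet ⊕ (V₁ ⊕ V₂))) :=
  doubleJoin G G₁ G₂ False True

/-- The `R`-graph double join `G^R ∨ (G₁•, G₂∘)`. -/
def rDoubleJoin {V V₁ V₂ : Type*} (G : SimpleGraph V) (G₁ : SimpleGraph V₁)
    (G₂ : SimpleGraph V₂) : SimpleGraph (V ⊕ (G.edgeSet ⊕ (V₁ ⊕ V₂))) :=
  doubleJoin G G₁ G₂ True False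

/-- The total double join `G^T ∨ (G₁•, G₂∘)`. -/
def totalDoubleJoin {V V₁ V₂ : Type*} (G : SimpleGraph V) (G₁ : SimpleGraph V₁)
    (G₂ : SimpleGraph V₂) : SimpleGraph (V ⊕ (G.edgeSet ⊕ (V₁ ⊕ V₂))) :=
  doubleJoin G G₁ G₂ True True

lemma lap_row {W : Type*} [Fintype W] [DecidableEq W] (H : SimpleGraph W) [DecidableRel H.Adj]
    (x : W → ℝ) (w : W) :
    (H.lapMatrix ℝ *ᵥ x) w = ∑ u, if H.Adj w u then x w - x u else 0 := by
  rw [SimpleGraph.lapMatrix_mulVec_apply]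
  have h1 : ∑ u, (if H.Adj w u then x w - x u else 0)
      = ∑ u ∈ H.neighborFinset w, (x w - x u) := by
    rw [SimpleGraph.neighborFinset_eq_filter, Finset.sum_filter]
  rw [h1, Finset.sum_sub_distrib, Finset.sum_const, nsmul_eq_mul, SimpleGraph.degree]

theorem stmt_10 {V V₁ V₂ : Type*} [Fintype V] [DecidableEq V] [Fintype V₁] [DecidableEq V₁]
    [Fintype V₂] [DecidableEq V₂]
    (G : SimpleGraph V) [DecidableRel G.Adj] [Fintype G.edgeSet]
    (G₁ : SimpleGraph V₁) [DecidableRel G₁.Adj] (G₂ : SimpleGraph V₂)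
    (k : ℕ) (hreg : G.IsRegularOfDegree k) (hconn : G.Connected)
    (μ : ℝ) (Z : V₁ → ℝ) (hZ0 : Z ≠ 0) (horth : ∑ i, Z i = 0)
    (hZ : G₁.lapMatrix ℝ *ᵥ Z = μ • Z) :
    (Sum.elim (0 : V → ℝ) (Sum.elim (0 : G.edgeSet → ℝ) (Sum.elim Z (0 : V₂ → ℝ))) ≠ 0) ∧
      lapR (subdivisionDoubleJoin G G₁ G₂) *ᵥ
        Sum.elim (0 : V → ℝ) (Sum.elim (0 : G.edgeSet → ℝ) (Sum.elim Z (0 : V₂ → ℝ))) =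
      (μ + (Fintype.card V : ℝ)) •
        Sum.elim (0 : V → ℝ) (Sum.elim (0 : G.edgeSet → ℝ) (Sum.elim Z (0 : V₂ → ℝ))) := by
  set H := subdivisionDoubleJoin G G₁ G₂ with hHdef
  letI : DecidableRel H.Adj := Classical.decRel _
  set X : (V ⊕ (G.edgeSet ⊕ (V₁ ⊕ V₂))) → ℝ :=
    Sum.elim (0 : V → ℝ) (Sum.elim (0 : G.edgeSet → ℝ) (Sum.elim Z (0 : V₂ → ℝ))) with hXdef
  have hLR : lapR H = H.lapMatrix ℝ := rfl
  -- adjacency facts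
  have hA1 : ∀ (v : V) (i : V₁), H.Adj (Sum.inl v) (Sum.inr (Sum.inr (Sum.inl i))) := by
    intro v i
    exact ⟨by simp, Or.inl trivial⟩
  have hA1' : ∀ (i : V₁) (v : V), H.Adj (Sum.inr (Sum.inr (Sum.inl i))) (Sum.inl v) :=
    fun i v => (hA1 v i).symm
  have hA2 : ∀ i j : V₁,
      H.Adj (Sum.inr (Sum.inr (Sum.inl i))) (Sum.inr (Sum.inr (Sum.inl j))) ↔ G₁.Adj i j := by
    intro i j
    constructor
    · rintro ⟨hne, h | h⟩
      · exact h
      · exact h.symm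
    · intro h
      exact ⟨by simpa using h.ne, Or.inl h⟩
  have hN1 : ∀ (e : G.edgeSet) (i : V₁),
      ¬ H.Adj (Sum.inr (Sum.inl e)) (Sum.inr (Sum.inr (Sum.inl i))) := by
    rintro e i ⟨hne, h | h⟩ <;> exact h
  have hN1' : ∀ (i : V₁) (e : G.edgeSet),
      ¬ H.Adj (Sum.inr (Sum.inr (Sum.inl i))) (Sum.inr (Sum.inl e)) :=
    fun i e h => hN1 e i h.symm
  have hN2 : ∀ (u : V₂) (i : V₁),
      ¬ H.Adj (Sum.inr (Sum.inr (Sum.inr u))) (Sum.inr (Sum.inr (Sum.inl i))) := by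
    rintro u i ⟨hne, h | h⟩ <;> exact h
  have hN2' : ∀ (i : V₁) (u : V₂),
      ¬ H.Adj (Sum.inr (Sum.inr (Sum.inl i))) (Sum.inr (Sum.inr (Sum.inr u))) :=
    fun i u h => hN2 u i h.symm
  have hG1 : ∀ i : V₁, ∑ j, (if G₁.Adj i j then Z i - Z j else 0) = μ * Z i := by
    intro i
    have h := congrFun hZ i
    rw [lap_row] at h
    simpa using h
  constructor
  · intro h
    apply hZ0
    funext i
    exact congrFun h (Sum.inr (Sum.inr (Sum.inl i)))
  · funext w
    rw [hLR, lap_row]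
    match w with
    | Sum.inl v =>
        simp only [hXdef, Sum.elim_inl, Sum.elim_inr, Pi.zero_apply, Fintype.sum_sum_type,
          sub_self, ite_self, Finset.sum_const_zero, zero_sub, Pi.smul_apply, smul_eq_mul,
          mul_zero, hA1, if_true, sub_zero]
        rw [Finset.sum_neg_distrib, horth, neg_zero]
        simp
    | Sum.inr (Sum.inl e) =>
        have hzero : ∀ i : V₁,
            (if H.Adj (Sum.inr (Sum.inl e)) (Sum.inr (Sum.inr (Sum.inl i))) then
              X (Sum.inr (Sum.inl e)) - Z i else 0) = 0 := by
          intro i; rw [if_neg (hN1 e i)]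
        simp only [hXdef, Sum.elim_inl, Sum.elim_inr, Pi.zero_apply, Fintype.sum_sum_type,
          sub_self, ite_self, Finset.sum_const_zero, Pi.smul_apply, smul_eq_mul, mul_zero]
        simp [hN1]
    | Sum.inr (Sum.inr (Sum.inl i)) =>
        simp only [hXdef, Sum.elim_inl, Sum.elim_inr, Pi.zero_apply, Fintype.sum_sum_type,
          sub_self, ite_self, Finset.sum_const_zero, Pi.smul_apply, smul_eq_mul, sub_zero]
        have h1 : ∑ v : V, (if H.Adj (Sum.inr (Sum.inr (Sum.inl i))) (Sum.inl v)
            then Z i else 0) = (Fintype.card V : ℝ) * Z i := by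
          simp [hA1', Finset.card_univ]
        have h2 : ∑ e : G.edgeSet, (if H.Adj (Sum.inr (Sum.inr (Sum.inl i)))
            (Sum.inr (Sum.inl e)) then Z i else 0) = 0 := by
          simp [fun e => hN1' i e]
        have h3 : ∑ j : V₁, (if H.Adj (Sum.inr (Sum.inr (Sum.inl i)))
            (Sum.inr (Sum.inr (Sum.inl j))) then Z i - Z j else 0) = μ * Z i := by
          rw [← hG1 i]
          refine Finset.sum_congr rfl fun j _ => ?_
          by_cases h : G₁.Adj i j
          · rw [if_pos ((hA2 i j).2 h), if_pos h]
          · rw [if_neg (fun hh => h ((hA2 i j).1 hh)), if_neg h]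
        have h4 : ∑ u : V₂, (if H.Adj (Sum.inr (Sum.inr (Sum.inl i)))
            (Sum.inr (Sum.inr (Sum.inr u))) then Z i else 0) = 0 := by
          simp [fun u => hN2' i u]
        rw [h1, h2, h3, h4]
        ring
    | Sum.inr (Sum.inr (Sum.inr u)) =>
        simp only [hXdef, Sum.elim_inl, Sum.elim_inr, Pi.zero_apply, Fintype.sum_sum_type,
          sub_self, ite_self, Finset.sum_const_zero, Pi.smul_apply, smul_eq_mul, mul_zero]
        simp [hN2]
end

section
/- Let G be a k-regular connected graph with n vertices and m edges, and G₁, G₂ graphs on n₁, n₂ vertices. If μ is a Laplacian eigenvalue of G₂ with eigenvector W ⊥ 1_{n₂}, then μ + m is a Laplacian eigenvalue of the subdivision double join G^S∨(G₁•, G₂∘). -/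
open Matrix SimpleGraph Finset

lemma lap_mulVec_if {V : Type*} [Fintype V] [DecidableEq V] (H : SimpleGraph V)
    [DecidableRel H.Adj] (x : V → ℝ) (v : V) :
    (H.lapMatrix ℝ *ᵥ x) v = ∑ u, if H.Adj v u then x v - x u else 0 := by
  rw [SimpleGraph.lapMatrix_mulVec_apply]
  have h1 : ∑ u, (if H.Adj v u then x v - x u else 0)
      = ∑ u ∈ H.neighborFinset v, (x v - x u) := by
    rw [← Finset.sum_filter]
    congr 1
    ext u
    simp [SimpleGraph.mem_neighborFinset]
  rw [h1, Finset.sum_sub_distrib, Finset.sum_const, SimpleGraph.card_neighborFinset_eq_degree]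
  ring
theorem stmt_11 {V V₁ V₂ : Type*} [Fintype V] [DecidableEq V] [Fintype V₁] [DecidableEq V₁]
    [Fintype V₂] [DecidableEq V₂]
    (G : SimpleGraph V) [DecidableRel G.Adj] [Fintype G.edgeSet]
    (G₁ : SimpleGraph V₁) (G₂ : SimpleGraph V₂) [DecidableRel G₂.Adj]
    (k : ℕ) (hreg : G.IsRegularOfDegree k) (hconn : G.Connected)
    (μ : ℝ) (W : V₂ → ℝ) (hW0 : W ≠ 0) (horth : ∑ i, W i = 0)
    (hW : G₂.lapMatrix ℝ *ᵥ W = μ • W) :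
    ∃ x : (V ⊕ (G.edgeSet ⊕ (V₁ ⊕ V₂))) → ℝ, x ≠ 0 ∧
      lapR (subdivisionDoubleJoin G G₁ G₂) *ᵥ x =
        (μ + (Fintype.card G.edgeSet : ℝ)) • x := by
  classical
  set m : ℝ := (Fintype.card G.edgeSet : ℝ) with hm
  set x : (V ⊕ (G.edgeSet ⊕ (V₁ ⊕ V₂))) → ℝ :=
    Sum.elim (fun _ => 0) (Sum.elim (fun _ => 0) (Sum.elim (fun _ => 0) W)) with hx
  refine ⟨x, ?_, ?_⟩
  · obtain ⟨w, hw⟩ := Function.ne_iff.mp hW0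
    intro h
    apply hw
    have := congrFun h (Sum.inr (Sum.inr (Sum.inr w)))
    simpa [hx] using this
  · letI : DecidableRel (subdivisionDoubleJoin G G₁ G₂).Adj := Classical.decRel _
    have hlap : lapR (subdivisionDoubleJoin G G₁ G₂) =
        (subdivisionDoubleJoin G G₁ G₂).lapMatrix ℝ := by
      unfold lapR
      congr 1
    rw [hlap]
    funext a
    rw [lap_mulVec_if]
    have hadj : ∀ a b, (subdivisionDoubleJoin G G₁ G₂).Adj a b ↔
        a ≠ b ∧ (djRel G G₁ G₂ False False a b ∨ djRel G G₁ G₂ False False b a) := by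
      intro a b
      simp [subdivisionDoubleJoin, doubleJoin, SimpleGraph.fromRel_adj]
    rw [Fintype.sum_sum_type, Fintype.sum_sum_type, Fintype.sum_sum_type]
    obtain (v | e | u | w0) := a
    · have h1 : ∀ b : V, (if (subdivisionDoubleJoin G G₁ G₂).Adj (Sum.inl v) (Sum.inl b)
          then x (Sum.inl v) - x (Sum.inl b) else 0) = 0 := by
        intro b; simp only [hadj]; simp [djRel, hx]
      have h2 : ∀ e : G.edgeSet, (if (subdivisionDoubleJoin G G₁ G₂).Adj (Sum.inl v)
          (Sum.inr (Sum.inl e)) then x (Sum.inl v) - x (Sum.inr (Sum.inl e)) else 0) = 0 := by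
        intro e; simp [hx]
      have h3 : ∀ b : V₁, (if (subdivisionDoubleJoin G G₁ G₂).Adj (Sum.inl v)
          (Sum.inr (Sum.inr (Sum.inl b))) then x (Sum.inl v) - x (Sum.inr (Sum.inr (Sum.inl b)))
          else 0) = 0 := by
        intro b; simp [hx]
      have h4 : ∀ b : V₂, (if (subdivisionDoubleJoin G G₁ G₂).Adj (Sum.inl v)
          (Sum.inr (Sum.inr (Sum.inr b))) then x (Sum.inl v) - x (Sum.inr (Sum.inr (Sum.inr b)))
          else 0) = 0 := by
        intro b; simp only [hadj]; simp [djRel]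
      simp only [h1, h2, h3, h4, Finset.sum_const_zero, add_zero]
      simp [hx]
    · have h1 : ∀ b : V, (if (subdivisionDoubleJoin G G₁ G₂).Adj (Sum.inr (Sum.inl e))
          (Sum.inl b) then x (Sum.inr (Sum.inl e)) - x (Sum.inl b) else 0) = 0 := by
        intro b; simp [hx]
      have h2 : ∀ f : G.edgeSet, (if (subdivisionDoubleJoin G G₁ G₂).Adj (Sum.inr (Sum.inl e))
          (Sum.inr (Sum.inl f)) then x (Sum.inr (Sum.inl e)) - x (Sum.inr (Sum.inl f)) else 0)
          = 0 := by
        intro f; simp only [hadj]; simp [djRel]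
      have h3 : ∀ b : V₁, (if (subdivisionDoubleJoin G G₁ G₂).Adj (Sum.inr (Sum.inl e))
          (Sum.inr (Sum.inr (Sum.inl b))) then x (Sum.inr (Sum.inl e)) -
          x (Sum.inr (Sum.inr (Sum.inl b))) else 0) = 0 := by
        intro b; simp only [hadj]; simp [djRel]
      have h4 : ∀ b : V₂, (if (subdivisionDoubleJoin G G₁ G₂).Adj (Sum.inr (Sum.inl e))
          (Sum.inr (Sum.inr (Sum.inr b))) then x (Sum.inr (Sum.inl e)) -
          x (Sum.inr (Sum.inr (Sum.inr b))) else 0) = - W b := by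
        intro b; simp only [hadj]; simp [djRel, hx]
      simp only [h1, h2, h3, h4, Finset.sum_const_zero, zero_add, add_zero]
      simp [hx, Finset.sum_neg_distrib, horth]
    · have h1 : ∀ b : V, (if (subdivisionDoubleJoin G G₁ G₂).Adj
          (Sum.inr (Sum.inr (Sum.inl u))) (Sum.inl b)
          then x (Sum.inr (Sum.inr (Sum.inl u))) - x (Sum.inl b) else 0) = 0 := by
        intro b; simp [hx]
      have h2 : ∀ f : G.edgeSet, (if (subdivisionDoubleJoin G G₁ G₂).Adj
          (Sum.inr (Sum.inr (Sum.inl u))) (Sum.inr (Sum.inl f))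
          then x (Sum.inr (Sum.inr (Sum.inl u))) - x (Sum.inr (Sum.inl f)) else 0) = 0 := by
        intro f; simp only [hadj]; simp [djRel]
      have h3 : ∀ b : V₁, (if (subdivisionDoubleJoin G G₁ G₂).Adj
          (Sum.inr (Sum.inr (Sum.inl u))) (Sum.inr (Sum.inr (Sum.inl b)))
          then x (Sum.inr (Sum.inr (Sum.inl u))) - x (Sum.inr (Sum.inr (Sum.inl b))) else 0)
          = 0 := by
        intro b; simp [hx]
      have h4 : ∀ b : V₂, (if (subdivisionDoubleJoin G G₁ G₂).Adj
          (Sum.inr (Sum.inr (Sum.inl u))) (Sum.inr (Sum.inr (Sum.inr b)))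
          then x (Sum.inr (Sum.inr (Sum.inl u))) - x (Sum.inr (Sum.inr (Sum.inr b))) else 0)
          = 0 := by
        intro b; simp only [hadj]; simp [djRel]
      simp only [h1, h2, h3, h4, Finset.sum_const_zero, add_zero]
      simp [hx]
    · have h1 : ∀ b : V, (if (subdivisionDoubleJoin G G₁ G₂).Adj
          (Sum.inr (Sum.inr (Sum.inr w0))) (Sum.inl b)
          then x (Sum.inr (Sum.inr (Sum.inr w0))) - x (Sum.inl b) else 0) = 0 := by
        intro b; simp only [hadj]; simp [djRel]
      have h2 : ∀ f : G.edgeSet, (if (subdivisionDoubleJoin G G₁ G₂).Adj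
          (Sum.inr (Sum.inr (Sum.inr w0))) (Sum.inr (Sum.inl f))
          then x (Sum.inr (Sum.inr (Sum.inr w0))) - x (Sum.inr (Sum.inl f)) else 0) = W w0 := by
        intro f; simp only [hadj]; simp [djRel, hx]
      have h3 : ∀ b : V₁, (if (subdivisionDoubleJoin G G₁ G₂).Adj
          (Sum.inr (Sum.inr (Sum.inr w0))) (Sum.inr (Sum.inr (Sum.inl b)))
          then x (Sum.inr (Sum.inr (Sum.inr w0))) - x (Sum.inr (Sum.inr (Sum.inl b))) else 0)
          = 0 := by
        intro b; simp only [hadj]; simp [djRel]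
      have h4 : ∀ b : V₂, (if (subdivisionDoubleJoin G G₁ G₂).Adj
          (Sum.inr (Sum.inr (Sum.inr w0))) (Sum.inr (Sum.inr (Sum.inr b)))
          then x (Sum.inr (Sum.inr (Sum.inr w0))) - x (Sum.inr (Sum.inr (Sum.inr b))) else 0)
          = if G₂.Adj w0 b then W w0 - W b else 0 := by
        intro b
        simp only [hadj]
        have : (Sum.inr (Sum.inr (Sum.inr w0)) : V ⊕ (G.edgeSet ⊕ (V₁ ⊕ V₂))) ≠
            Sum.inr (Sum.inr (Sum.inr b)) ∧
            (djRel G G₁ G₂ False False (Sum.inr (Sum.inr (Sum.inr w0)))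
              (Sum.inr (Sum.inr (Sum.inr b))) ∨
             djRel G G₁ G₂ False False (Sum.inr (Sum.inr (Sum.inr b)))
              (Sum.inr (Sum.inr (Sum.inr w0)))) ↔ G₂.Adj w0 b := by
          constructor
          · rintro ⟨-, h | h⟩
            · exact h
            · exact h.symm
          · intro h
            exact ⟨by simp [h.ne], Or.inl h⟩
        simp only [this]
        simp [hx]
      simp only [h1, h2, h3, h4, Finset.sum_const_zero, zero_add, add_zero, Finset.sum_const,
        Finset.card_univ]
      have hG2 : ∑ b : V₂, (if G₂.Adj w0 b then W w0 - W b else 0) = μ * W w0 := by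
        rw [← lap_mulVec_if, hW]
        simp
      rw [hG2]
      simp [hx, hm]
      ring
end

section
/- Let G be a k-regular connected graph with n vertices and m edges (m > n), and G₁, G₂ graphs on n₁, n₂ vertices. Then n₂ + 2 is a Laplacian eigenvalue of the subdivision double join G^S∨(G₁•, G₂∘) with multiplicity at least m − n; specifically, each vector Y ∈ ℝ^m with M·Y = 0 and Y ⊥ 1_m yields an eigenvector (0_n, Y, 0_{n₁}, 0_{n₂}) with eigenvalue n₂ + 2, where M is the incidence matrix of G. -/
open Matrix SimpleGraph

section Aux
open Classical in
lemma lapR_mulVec_apply {W : Type*} [Fintype W] [DecidableEq W] (H : SimpleGraph W)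
    (x : W → ℝ) (i : W) :
    (lapR H *ᵥ x) i =
      (∑ j, if H.Adj i j then (1:ℝ) else 0) * x i - ∑ j, if H.Adj i j then x j else 0 := by
  classical
  unfold lapR
  rw [show (∑ j, if H.Adj i j then (1:ℝ) else 0) = (H.degree i : ℝ) by
    rw [Finset.sum_boole, degree, neighborFinset_eq_filter]]
  simp [lapMatrix, sub_mulVec, degMatrix, mulVec, dotProduct, Matrix.diagonal_apply,
    adjMatrix_apply, ite_mul, Finset.sum_ite_eq, sub_mul, Finset.sum_sub_distrib]

variable {V V₁ V₂ : Type*} (G : SimpleGraph V) (G₁ : SimpleGraph V₁) (G₂ : SimpleGraph V₂)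

lemma sdj_adj_ll (u v : V) : ¬ (subdivisionDoubleJoin G G₁ G₂).Adj (Sum.inl u) (Sum.inl v) := by
  simp [subdivisionDoubleJoin, doubleJoin, fromRel_adj, djRel]

lemma sdj_adj_le (v : V) (e : G.edgeSet) :
    (subdivisionDoubleJoin G G₁ G₂).Adj (Sum.inl v) (Sum.inr (Sum.inl e)) ↔ v ∈ (e : Sym2 V) := by
  simp [subdivisionDoubleJoin, doubleJoin, fromRel_adj, djRel]

lemma sdj_adj_l1 (v : V) (u : V₁) :
    (subdivisionDoubleJoin G G₁ G₂).Adj (Sum.inl v) (Sum.inr (Sum.inr (Sum.inl u))) := by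
  simp [subdivisionDoubleJoin, doubleJoin, fromRel_adj, djRel]

lemma sdj_adj_l2 (v : V) (u : V₂) :
    ¬ (subdivisionDoubleJoin G G₁ G₂).Adj (Sum.inl v) (Sum.inr (Sum.inr (Sum.inr u))) := by
  simp [subdivisionDoubleJoin, doubleJoin, fromRel_adj, djRel]

lemma sdj_adj_ee (e f : G.edgeSet) :
    ¬ (subdivisionDoubleJoin G G₁ G₂).Adj (Sum.inr (Sum.inl e)) (Sum.inr (Sum.inl f)) := by
  simp [subdivisionDoubleJoin, doubleJoin, fromRel_adj, djRel]

lemma sdj_adj_e1 (e : G.edgeSet) (u : V₁) :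
    ¬ (subdivisionDoubleJoin G G₁ G₂).Adj (Sum.inr (Sum.inl e)) (Sum.inr (Sum.inr (Sum.inl u))) := by
  simp [subdivisionDoubleJoin, doubleJoin, fromRel_adj, djRel]

lemma sdj_adj_e2 (e : G.edgeSet) (u : V₂) :
    (subdivisionDoubleJoin G G₁ G₂).Adj (Sum.inr (Sum.inl e)) (Sum.inr (Sum.inr (Sum.inr u))) := by
  simp [subdivisionDoubleJoin, doubleJoin, fromRel_adj, djRel]

lemma sdj_adj_11 (u w : V₁) :
    (subdivisionDoubleJoin G G₁ G₂).Adj (Sum.inr (Sum.inr (Sum.inl u))) (Sum.inr (Sum.inr (Sum.inl w)))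
      ↔ G₁.Adj u w := by
  simp only [subdivisionDoubleJoin, doubleJoin, fromRel_adj, djRel]
  constructor
  · rintro ⟨h, h' | h'⟩
    · exact h'
    · exact h'.symm
  · intro h
    exact ⟨by simp [h.ne], Or.inl h⟩

lemma sdj_adj_12 (u : V₁) (w : V₂) :
    ¬ (subdivisionDoubleJoin G G₁ G₂).Adj (Sum.inr (Sum.inr (Sum.inl u))) (Sum.inr (Sum.inr (Sum.inr w))) := by
  simp [subdivisionDoubleJoin, doubleJoin, fromRel_adj, djRel]

lemma sdj_adj_22 (u w : V₂) :
    (subdivisionDoubleJoin G G₁ G₂).Adj (Sum.inr (Sum.inr (Sum.inr u))) (Sum.inr (Sum.inr (Sum.inr w)))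
      ↔ G₂.Adj u w := by
  simp only [subdivisionDoubleJoin, doubleJoin, fromRel_adj, djRel]
  constructor
  · rintro ⟨h, h' | h'⟩
    · exact h'
    · exact h'.symm
  · intro h
    exact ⟨by simp [h.ne], Or.inl h⟩

lemma sdj_adj_le' (v : V) (e : G.edgeSet) :
    (subdivisionDoubleJoin G G₁ G₂).Adj (Sum.inr (Sum.inl e)) (Sum.inl v) ↔ v ∈ (e : Sym2 V) := by
  rw [SimpleGraph.adj_comm]; exact sdj_adj_le G G₁ G₂ v e

lemma sdj_adj_e1' (e : G.edgeSet) (u : V₁) :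
    ¬ (subdivisionDoubleJoin G G₁ G₂).Adj (Sum.inr (Sum.inr (Sum.inl u))) (Sum.inr (Sum.inl e)) :=
  fun h => sdj_adj_e1 G G₁ G₂ e u h.symm

lemma sdj_adj_e2' (e : G.edgeSet) (u : V₂) :
    (subdivisionDoubleJoin G G₁ G₂).Adj (Sum.inr (Sum.inr (Sum.inr u))) (Sum.inr (Sum.inl e)) :=
  (sdj_adj_e2 G G₁ G₂ e u).symm

variable [Fintype V] [DecidableEq V]

/-- sum over vertices of an edge membership indicator is 2 -/
lemma sum_mem_edge (e : G.edgeSet) :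
    ∑ v : V, (if v ∈ (e : Sym2 V) then (1:ℝ) else 0) = 2 := by
  classical
  obtain ⟨e, he⟩ := e
  induction e with
  | _ a b =>
    have hab : a ≠ b := by
      intro h; subst h; exact G.not_isDiag_of_mem_edgeSet he (by simp)
    simp only [Sym2.mem_iff]
    have key : ∀ x : V, (if x = a ∨ x = b then (1:ℝ) else 0)
        = (if x = a then 1 else 0) + (if x = b then 1 else 0) := by
      intro x
      by_cases h1 : x = a <;> by_cases h2 : x = b <;> simp_all
    rw [Finset.sum_congr rfl fun x _ => key x, Finset.sum_add_distrib,
      Finset.sum_ite_eq' Finset.univ a (fun _ => (1:ℝ)),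
      Finset.sum_ite_eq' Finset.univ b (fun _ => (1:ℝ))]
    norm_num

variable [Fintype V₁] [Fintype V₂] [DecidableRel G.Adj] [Fintype G.edgeSet]
  [DecidableEq V₁] [DecidableEq V₂]

lemma sdj_lap_mulVec (Y : G.edgeSet → ℝ) (h1 : edgeIncMatrix G *ᵥ Y = 0)
    (h2 : ∑ e, Y e = 0) :
    lapR (subdivisionDoubleJoin G G₁ G₂) *ᵥ
        Sum.elim (0 : V → ℝ) (Sum.elim Y (Sum.elim (0 : V₁ → ℝ) (0 : V₂ → ℝ))) =
      ((Fintype.card V₂ : ℝ) + 2) •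
        Sum.elim (0 : V → ℝ) (Sum.elim Y (Sum.elim (0 : V₁ → ℝ) (0 : V₂ → ℝ))) := by
  classical
  funext i
  rw [lapR_mulVec_apply]
  have hMY : ∀ v : V, ∑ e : G.edgeSet, (if v ∈ (e : Sym2 V) then Y e else 0) = 0 := by
    intro v
    have := congrFun h1 v
    simpa [edgeIncMatrix, mulVec, dotProduct, ite_mul] using this
  rcases i with v | e | u | u
  · simp only [Fintype.sum_sum_type, Pi.smul_apply, Sum.elim_inl, Sum.elim_inr,
      sdj_adj_ll, sdj_adj_le, sdj_adj_l1, sdj_adj_l2, if_true, if_false,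
      Finset.sum_const_zero, smul_eq_mul, mul_zero, Pi.zero_apply]
    rw [hMY v]
    ring
  · simp only [Fintype.sum_sum_type, Pi.smul_apply, Sum.elim_inl, Sum.elim_inr,
      sdj_adj_le, sdj_adj_ee, sdj_adj_e1, sdj_adj_e2, if_true, if_false,
      Finset.sum_const_zero, Finset.sum_const, smul_eq_mul, Pi.zero_apply,
      sdj_adj_le', ite_self, sum_mem_edge, Finset.card_univ]
    push_cast
    -- cast normalization
    ring
  · simp only [Fintype.sum_sum_type, Pi.smul_apply, Sum.elim_inl, Sum.elim_inr,
      sdj_adj_e1', sdj_adj_12, if_true, if_false, ite_self,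
      Finset.sum_const_zero, smul_eq_mul, mul_zero, Pi.zero_apply]
    ring
  · simp only [Fintype.sum_sum_type, Pi.smul_apply, Sum.elim_inl, Sum.elim_inr,
      sdj_adj_e2', if_true, if_false, ite_self,
      Finset.sum_const_zero, smul_eq_mul, mul_zero, Pi.zero_apply]
    rw [h2]
    ring

end Aux
theorem stmt_12 {V V₁ V₂ : Type*} [Fintype V] [DecidableEq V] [Fintype V₁] [DecidableEq V₁]
    [Fintype V₂] [DecidableEq V₂]
    (G : SimpleGraph V) [DecidableRel G.Adj] [Fintype G.edgeSet]
    (G₁ : SimpleGraph V₁) (G₂ : SimpleGraph V₂)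
    (k : ℕ) (hreg : G.IsRegularOfDegree k) (hconn : G.Connected)
    (hmn : Fintype.card V < Fintype.card G.edgeSet) :
    (Fintype.card G.edgeSet - Fintype.card V ≤
        Module.finrank ℝ
          (Module.End.eigenspace (Matrix.mulVecLin (lapR (subdivisionDoubleJoin G G₁ G₂)))
            ((Fintype.card V₂ : ℝ) + 2))) ∧
      ∀ Y : G.edgeSet → ℝ, edgeIncMatrix G *ᵥ Y = 0 → (∑ e, Y e = 0) → Y ≠ 0 →
        (Sum.elim (0 : V → ℝ) (Sum.elim Y (Sum.elim (0 : V₁ → ℝ) (0 : V₂ → ℝ))) ≠ 0) ∧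
          lapR (subdivisionDoubleJoin G G₁ G₂) *ᵥ
            Sum.elim (0 : V → ℝ) (Sum.elim Y (Sum.elim (0 : V₁ → ℝ) (0 : V₂ → ℝ))) =
          ((Fintype.card V₂ : ℝ) + 2) •
            Sum.elim (0 : V → ℝ) (Sum.elim Y (Sum.elim (0 : V₁ → ℝ) (0 : V₂ → ℝ))) := by
  classical
  set μ : ℝ := (Fintype.card V₂ : ℝ) + 2 with hμ
  -- the embedding of edge-space vectors
  let φ : (G.edgeSet → ℝ) →ₗ[ℝ] ((V ⊕ (G.edgeSet ⊕ (V₁ ⊕ V₂))) → ℝ) :=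
    { toFun := fun Y => Sum.elim (0 : V → ℝ) (Sum.elim Y (Sum.elim (0 : V₁ → ℝ) (0 : V₂ → ℝ)))
      map_add' := by
        intro Y Z; funext i; rcases i with v | e | u | u <;> simp
      map_smul' := by
        intro c Y; funext i; rcases i with v | e | u | u <;> simp }
  have hφ_inj : Function.Injective φ := by
    intro Y Z h
    funext e
    have := congrFun h (Sum.inr (Sum.inl e))
    simpa [φ] using this
  -- kernel members automatically sum to zero
  have hker_sum : ∀ Y : G.edgeSet → ℝ, edgeIncMatrix G *ᵥ Y = 0 → ∑ e, Y e = 0 := by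
    intro Y hY
    have h0 : ∑ v : V, (edgeIncMatrix G *ᵥ Y) v = 0 := by rw [hY]; simp
    have hcomm : ∑ v : V, (edgeIncMatrix G *ᵥ Y) v = 2 * ∑ e, Y e := by
      simp only [mulVec, dotProduct, edgeIncMatrix, Matrix.of_apply]
      rw [Finset.sum_comm]
      rw [Finset.mul_sum]
      refine Finset.sum_congr rfl fun e _ => ?_
      rw [← Finset.sum_mul, sum_mem_edge G e]
    rw [hcomm] at h0
    linarith
  constructor
  · -- multiplicity bound
    let K := LinearMap.ker (edgeIncMatrix G).mulVecLin
    have hmap : Submodule.map φ K ≤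
        Module.End.eigenspace (Matrix.mulVecLin (lapR (subdivisionDoubleJoin G G₁ G₂))) μ := by
      rintro x ⟨Y, hY, rfl⟩
      rw [Module.End.mem_eigenspace_iff]
      have hY' : edgeIncMatrix G *ᵥ Y = 0 := hY
      simpa [φ, Matrix.mulVecLin_apply] using
        sdj_lap_mulVec G G₁ G₂ Y hY' (hker_sum Y hY')
    have h1 : Module.finrank ℝ (Submodule.map φ K) = Module.finrank ℝ K :=
      (LinearEquiv.finrank_eq (Submodule.equivMapOfInjective φ hφ_inj K)).symm
    have h2 : Module.finrank ℝ (Submodule.map φ K) ≤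
        Module.finrank ℝ
          (Module.End.eigenspace (Matrix.mulVecLin (lapR (subdivisionDoubleJoin G G₁ G₂))) μ) :=
      Submodule.finrank_mono hmap
    have h3 : Module.finrank ℝ (LinearMap.range (edgeIncMatrix G).mulVecLin)
        + Module.finrank ℝ K = Fintype.card G.edgeSet := by
      rw [LinearMap.finrank_range_add_finrank_ker]
      simp [Module.finrank_pi]
    have h4 : Module.finrank ℝ (LinearMap.range (edgeIncMatrix G).mulVecLin)
        ≤ Fintype.card V := by
      have := Submodule.finrank_le (LinearMap.range (edgeIncMatrix G).mulVecLin)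
      simpa [Module.finrank_pi] using this
    omega
  · intro Y hY hsum hY0
    refine ⟨?_, sdj_lap_mulVec G G₁ G₂ Y hY hsum⟩
    intro h
    apply hY0
    funext e
    have := congrFun h (Sum.inr (Sum.inl e))
    simpa using this
end

section
/- Let G be a k-regular connected graph with n vertices and m > n edges, and G₁, G₂ graphs on n₁, n₂ vertices. Then n₂ + 2k + 2 is a Laplacian eigenvalue of the Q-graph double join G^Q∨(G₁•, G₂∘) with multiplicity at least m − n: every Y ∈ ℝ^m with M·Y = 0 and Y ⊥ 1_m gives an eigenvector (0_n, Y, 0_{n₁}, 0_{n₂}). -/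
open Matrix SimpleGraph

section Aux

open Finset

open scoped Classical in
lemma lap_mulVec {W : Type*} [Fintype W] [DecidableEq W] (H : SimpleGraph W) (x : W → ℝ)
    (w : W) :
    (lapR H *ᵥ x) w = ∑ u, if H.Adj w u then x w - x u else 0 := by
  classical
  show (lapMatrix ℝ H *ᵥ x) w = _
  rw [lapMatrix_mulVec_apply, degree_eq_sum_if_adj (R := ℝ)]
  rw [neighborFinset_eq_filter, Finset.sum_filter, Finset.sum_mul]
  rw [← Finset.sum_sub_distrib]
  congr 1
  ext u
  by_cases h : H.Adj w u <;> simp [h]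

variable {V V₁ V₂ : Type*} [Fintype V] [DecidableEq V] [Fintype V₁] [DecidableEq V₁]
    [Fintype V₂] [DecidableEq V₂]
    (G : SimpleGraph V) [DecidableRel G.Adj] [Fintype G.edgeSet]
    (G₁ : SimpleGraph V₁) (G₂ : SimpleGraph V₂)

/-- Each edge has exactly two endpoints. -/
lemma sum_ite_mem_edge (e : G.edgeSet) (c : ℝ) :
    ∑ v : V, (if v ∈ (e : Sym2 V) then c else 0) = 2 * c := by
  classical
  obtain ⟨e, he⟩ := e
  induction e with
  | _ a b =>
    rw [SimpleGraph.mem_edgeSet] at he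
    have hab : a ≠ b := he.ne
    have : ∀ v : V, (if v ∈ (s(a, b) : Sym2 V) then c else 0) =
        (if v = a then c else 0) + (if v = b then c else 0) := by
      intro v
      by_cases h1 : v = a <;> by_cases h2 : v = b <;>
        simp [Sym2.mem_iff, h1, h2] <;> simp_all
    simp only [this, Finset.sum_add_distrib, Finset.sum_ite_eq', Finset.mem_univ, if_true]
    ring

/-- In a `k`-regular graph, each vertex lies on exactly `k` edges. -/
lemma sum_ite_mem_vert {k : ℕ} (hreg : G.IsRegularOfDegree k) (a : V) :
    ∑ f : G.edgeSet, (if a ∈ (f : Sym2 V) then (1 : ℝ) else 0) = (k : ℝ) := by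
  classical
  rw [Finset.sum_boole]
  have hcard : #(Finset.univ.filter fun f : G.edgeSet => a ∈ (f : Sym2 V)) =
      Fintype.card {f : G.edgeSet // a ∈ (f : Sym2 V)} := (Fintype.card_subtype _).symm
  have hequiv : {f : G.edgeSet // a ∈ (f : Sym2 V)} ≃ G.incidenceSet a :=
    { toFun := fun f => ⟨f.1.1, f.1.2, f.2⟩
      invFun := fun x => ⟨⟨x.1, x.2.1⟩, x.2.2⟩
      left_inv := fun f => rfl
      right_inv := fun x => rfl }
  rw [hcard, Fintype.card_congr hequiv, Fintype.card_congr (Equiv.setCongr rfl),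
    G.card_incidenceSet_eq_degree, hreg a]

lemma mulVec_inc_apply (Y : G.edgeSet → ℝ) (a : V) :
    (edgeIncMatrix G *ᵥ Y) a = ∑ f : G.edgeSet, (if a ∈ (f : Sym2 V) then Y f else 0) := by
  classical
  simp [edgeIncMatrix, mulVec, dotProduct, ite_mul]

/-- If `M Y = 0` then automatically `∑ Y = 0` is implied only after summing;
here we record `∑ e, Y e = 0` directly. -/
lemma sum_eq_zero_of_inc (Y : G.edgeSet → ℝ) (h1 : edgeIncMatrix G *ᵥ Y = 0) :
    ∑ e, Y e = 0 := by
  classical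
  have h : ∑ a : V, (edgeIncMatrix G *ᵥ Y) a = 0 := by rw [h1]; simp
  rw [Finset.sum_congr rfl fun a _ => mulVec_inc_apply G Y a, Finset.sum_comm] at h
  have h2 : ∀ e : G.edgeSet, ∑ a : V, (if a ∈ (e : Sym2 V) then Y e else 0) = 2 * Y e :=
    fun e => sum_ite_mem_edge G e (Y e)
  rw [Finset.sum_congr rfl fun e _ => h2 e, ← Finset.mul_sum] at h
  linarith

open scoped Classical in
/-- The key eigenvector computation. -/
lemma key_mulVec (Y : G.edgeSet → ℝ) {k : ℕ} (hreg : G.IsRegularOfDegree k)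
    (h1 : edgeIncMatrix G *ᵥ Y = 0) :
    lapR (qDoubleJoin G G₁ G₂) *ᵥ
        Sum.elim (0 : V → ℝ) (Sum.elim Y (Sum.elim (0 : V₁ → ℝ) (0 : V₂ → ℝ))) =
      ((Fintype.card V₂ : ℝ) + 2 * (k : ℝ) + 2) •
        Sum.elim (0 : V → ℝ) (Sum.elim Y (Sum.elim (0 : V₁ → ℝ) (0 : V₂ → ℝ))) := by
  classical
  have h1' : ∀ a : V, ∑ f : G.edgeSet, (if a ∈ (f : Sym2 V) then Y f else 0) = 0 := by
    intro a
    rw [← mulVec_inc_apply, h1]; rfl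
  have h2 := sum_eq_zero_of_inc G Y h1
  set c : ℝ := (Fintype.card V₂ : ℝ) + 2 * (k : ℝ) + 2 with hc
  funext w
  rw [lap_mulVec]
  rcases w with v | e | w₁ | w₂
  · -- row indexed by a vertex of G
    simp only [Fintype.sum_sum_type]
    have hA : ∀ u : V, (if (qDoubleJoin G G₁ G₂).Adj (Sum.inl v) (Sum.inl u) then
        Sum.elim (0 : V → ℝ) (Sum.elim Y (Sum.elim (0 : V₁ → ℝ) (0 : V₂ → ℝ))) (Sum.inl v) -
          Sum.elim (0 : V → ℝ) (Sum.elim Y (Sum.elim (0 : V₁ → ℝ) (0 : V₂ → ℝ))) (Sum.inl u) else 0) = 0 := by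
      intro u; simp [qDoubleJoin, doubleJoin, djRel]
    have hB : ∀ f : G.edgeSet,
        (if (qDoubleJoin G G₁ G₂).Adj (Sum.inl v) (Sum.inr (Sum.inl f)) then
          Sum.elim (0 : V → ℝ) (Sum.elim Y (Sum.elim (0 : V₁ → ℝ) (0 : V₂ → ℝ))) (Sum.inl v) -
            Sum.elim (0 : V → ℝ) (Sum.elim Y (Sum.elim (0 : V₁ → ℝ) (0 : V₂ → ℝ))) (Sum.inr (Sum.inl f)) else 0) =
        -(if v ∈ (f : Sym2 V) then Y f else 0) := by
      intro f
      by_cases h : v ∈ (f : Sym2 V) <;> simp [qDoubleJoin, doubleJoin, djRel, h]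
    simp only [hA, hB, Finset.sum_const_zero, Finset.sum_neg_distrib, h1' v]
    simp [qDoubleJoin, doubleJoin, djRel]
  · -- row indexed by an edge-vertex
    simp only [Fintype.sum_sum_type]
    have hA : ∀ u : V, (if (qDoubleJoin G G₁ G₂).Adj (Sum.inr (Sum.inl e)) (Sum.inl u) then
        Sum.elim (0 : V → ℝ) (Sum.elim Y (Sum.elim (0 : V₁ → ℝ) (0 : V₂ → ℝ))) (Sum.inr (Sum.inl e)) -
          Sum.elim (0 : V → ℝ) (Sum.elim Y (Sum.elim (0 : V₁ → ℝ) (0 : V₂ → ℝ))) (Sum.inl u) else 0) =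
        (if u ∈ (e : Sym2 V) then Y e else 0) := by
      intro u
      by_cases h : u ∈ (e : Sym2 V) <;> simp [qDoubleJoin, doubleJoin, djRel, h]
    -- edge-vertex block: line graph neighbours
    obtain ⟨s, hs⟩ := e
    induction s with
    | _ a b =>
      rw [SimpleGraph.mem_edgeSet] at hs
      have hab : a ≠ b := hs.ne
      set e : G.edgeSet := ⟨s(a, b), hs⟩ with he
      have hB : ∀ f : G.edgeSet,
          (if (qDoubleJoin G G₁ G₂).Adj (Sum.inr (Sum.inl e)) (Sum.inr (Sum.inl f)) then
            Sum.elim (0 : V → ℝ) (Sum.elim Y (Sum.elim (0 : V₁ → ℝ) (0 : V₂ → ℝ))) (Sum.inr (Sum.inl e)) -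
              Sum.elim (0 : V → ℝ) (Sum.elim Y (Sum.elim (0 : V₁ → ℝ) (0 : V₂ → ℝ))) (Sum.inr (Sum.inl f)) else 0) =
          (if a ∈ (f : Sym2 V) then Y e - Y f else 0) +
            (if b ∈ (f : Sym2 V) then Y e - Y f else 0) := by
        intro f
        have hadj : (qDoubleJoin G G₁ G₂).Adj (Sum.inr (Sum.inl e)) (Sum.inr (Sum.inl f)) ↔
            e ≠ f ∧ (a ∈ (f : Sym2 V) ∨ b ∈ (f : Sym2 V)) := by
          simp only [qDoubleJoin, doubleJoin, SimpleGraph.fromRel_adj, djRel, he]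
          constructor
          · rintro ⟨hne, h | h⟩
            · refine ⟨by simpa using hne, ?_⟩
              obtain ⟨_, ⟨u, hu1, hu2⟩⟩ := h
              rcases Sym2.mem_iff.mp hu1 with rfl | rfl
              · exact Or.inl hu2
              · exact Or.inr hu2
            · refine ⟨by simpa using hne, ?_⟩
              obtain ⟨_, ⟨u, hu1, hu2⟩⟩ := h
              rcases Sym2.mem_iff.mp hu2 with rfl | rfl
              · exact Or.inl hu1
              · exact Or.inr hu1
          · rintro ⟨hne, h⟩
            refine ⟨by simpa using hne, Or.inl ⟨trivial, ?_⟩⟩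
            rcases h with h | h
            · exact ⟨a, by simp, h⟩
            · exact ⟨b, by simp, h⟩
        rw [if_congr hadj rfl rfl]
        by_cases hf : (f : Sym2 V) = s(a, b)
        · have hfe : f = e := Subtype.ext (by rw [hf])
          subst hfe
          simp [hab]
        · have hnef : e ≠ f := fun h => hf (by rw [← h])
          have hnot : ¬ (a ∈ (f : Sym2 V) ∧ b ∈ (f : Sym2 V)) := by
            rintro ⟨ha, hb⟩
            exact hf ((Sym2.mem_and_mem_iff hab).mp ⟨ha, hb⟩)
          by_cases ha : a ∈ (f : Sym2 V) <;> by_cases hb : b ∈ (f : Sym2 V) <;>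
            simp_all [hnef]
      have hsumB : ∑ f : G.edgeSet,
          ((if a ∈ (f : Sym2 V) then Y e - Y f else 0) +
            (if b ∈ (f : Sym2 V) then Y e - Y f else 0)) = 2 * (k : ℝ) * Y e := by
        have esplit : ∀ x : V, ∑ f : G.edgeSet, (if x ∈ (f : Sym2 V) then Y e - Y f else 0) =
            (k : ℝ) * Y e := by
          intro x
          have : ∀ f : G.edgeSet, (if x ∈ (f : Sym2 V) then Y e - Y f else 0) =
              (if x ∈ (f : Sym2 V) then (1 : ℝ) else 0) * Y e -
                (if x ∈ (f : Sym2 V) then Y f else 0) := by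
            intro f; by_cases h : x ∈ (f : Sym2 V) <;> simp [h]
          rw [Finset.sum_congr rfl fun f _ => this f, Finset.sum_sub_distrib,
            ← Finset.sum_mul, sum_ite_mem_vert G hreg x, h1' x, sub_zero]
        rw [Finset.sum_add_distrib, esplit a, esplit b]; ring
      have hC : ∀ u : V₁,
          (if (qDoubleJoin G G₁ G₂).Adj (Sum.inr (Sum.inl e)) (Sum.inr (Sum.inr (Sum.inl u))) then
            Sum.elim (0 : V → ℝ) (Sum.elim Y (Sum.elim (0 : V₁ → ℝ) (0 : V₂ → ℝ))) (Sum.inr (Sum.inl e)) -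
              Sum.elim (0 : V → ℝ) (Sum.elim Y (Sum.elim (0 : V₁ → ℝ) (0 : V₂ → ℝ))) (Sum.inr (Sum.inr (Sum.inl u)))
          else 0) = 0 := by
        intro u; simp [qDoubleJoin, doubleJoin, djRel]
      have hD : ∀ u : V₂,
          (if (qDoubleJoin G G₁ G₂).Adj (Sum.inr (Sum.inl e)) (Sum.inr (Sum.inr (Sum.inr u))) then
            Sum.elim (0 : V → ℝ) (Sum.elim Y (Sum.elim (0 : V₁ → ℝ) (0 : V₂ → ℝ))) (Sum.inr (Sum.inl e)) -
              Sum.elim (0 : V → ℝ) (Sum.elim Y (Sum.elim (0 : V₁ → ℝ) (0 : V₂ → ℝ))) (Sum.inr (Sum.inr (Sum.inr u)))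
          else 0) = Y e := by
        intro u; simp [qDoubleJoin, doubleJoin, djRel]
      rw [Finset.sum_congr rfl fun u _ => hA u, Finset.sum_congr rfl fun f _ => hB f,
        Finset.sum_congr rfl fun u _ => hC u, Finset.sum_congr rfl fun u _ => hD u,
        sum_ite_mem_edge G e (Y e), hsumB]
      simp only [Finset.sum_const_zero, Finset.sum_const, Finset.card_univ, nsmul_eq_mul]
      simp only [Pi.smul_apply, Sum.elim_inr, Sum.elim_inl, smul_eq_mul, hc]
      ring
  · -- row indexed by a vertex of G₁
    simp only [Fintype.sum_sum_type]
    have hA : ∀ u : V, (if (qDoubleJoin G G₁ G₂).Adj (Sum.inr (Sum.inr (Sum.inl w₁)))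
        (Sum.inl u) then
        Sum.elim (0 : V → ℝ) (Sum.elim Y (Sum.elim (0 : V₁ → ℝ) (0 : V₂ → ℝ))) (Sum.inr (Sum.inr (Sum.inl w₁))) -
          Sum.elim (0 : V → ℝ) (Sum.elim Y (Sum.elim (0 : V₁ → ℝ) (0 : V₂ → ℝ))) (Sum.inl u) else 0) = 0 := by
      intro u; simp
    have hB : ∀ f : G.edgeSet, (if (qDoubleJoin G G₁ G₂).Adj (Sum.inr (Sum.inr (Sum.inl w₁)))
        (Sum.inr (Sum.inl f)) then
        Sum.elim (0 : V → ℝ) (Sum.elim Y (Sum.elim (0 : V₁ → ℝ) (0 : V₂ → ℝ))) (Sum.inr (Sum.inr (Sum.inl w₁))) -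
          Sum.elim (0 : V → ℝ) (Sum.elim Y (Sum.elim (0 : V₁ → ℝ) (0 : V₂ → ℝ))) (Sum.inr (Sum.inl f)) else 0) = 0 := by
      intro f; simp [qDoubleJoin, doubleJoin, djRel]
    have hC : ∀ u : V₁, (if (qDoubleJoin G G₁ G₂).Adj (Sum.inr (Sum.inr (Sum.inl w₁)))
        (Sum.inr (Sum.inr (Sum.inl u))) then
        Sum.elim (0 : V → ℝ) (Sum.elim Y (Sum.elim (0 : V₁ → ℝ) (0 : V₂ → ℝ))) (Sum.inr (Sum.inr (Sum.inl w₁))) -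
          Sum.elim (0 : V → ℝ) (Sum.elim Y (Sum.elim (0 : V₁ → ℝ) (0 : V₂ → ℝ))) (Sum.inr (Sum.inr (Sum.inl u)))
        else 0) = 0 := by
      intro u; simp
    have hD : ∀ u : V₂, (if (qDoubleJoin G G₁ G₂).Adj (Sum.inr (Sum.inr (Sum.inl w₁)))
        (Sum.inr (Sum.inr (Sum.inr u))) then
        Sum.elim (0 : V → ℝ) (Sum.elim Y (Sum.elim (0 : V₁ → ℝ) (0 : V₂ → ℝ))) (Sum.inr (Sum.inr (Sum.inl w₁))) -
          Sum.elim (0 : V → ℝ) (Sum.elim Y (Sum.elim (0 : V₁ → ℝ) (0 : V₂ → ℝ))) (Sum.inr (Sum.inr (Sum.inr u)))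
        else 0) = 0 := by
      intro u; simp
    simp only [hA, hB, hC, hD, Finset.sum_const_zero, add_zero]
    simp
  · -- row indexed by a vertex of G₂
    simp only [Fintype.sum_sum_type]
    have hA : ∀ u : V, (if (qDoubleJoin G G₁ G₂).Adj (Sum.inr (Sum.inr (Sum.inr w₂)))
        (Sum.inl u) then
        Sum.elim (0 : V → ℝ) (Sum.elim Y (Sum.elim (0 : V₁ → ℝ) (0 : V₂ → ℝ))) (Sum.inr (Sum.inr (Sum.inr w₂))) -
          Sum.elim (0 : V → ℝ) (Sum.elim Y (Sum.elim (0 : V₁ → ℝ) (0 : V₂ → ℝ))) (Sum.inl u) else 0) = 0 := by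
      intro u; simp
    have hB : ∀ f : G.edgeSet, (if (qDoubleJoin G G₁ G₂).Adj (Sum.inr (Sum.inr (Sum.inr w₂)))
        (Sum.inr (Sum.inl f)) then
        Sum.elim (0 : V → ℝ) (Sum.elim Y (Sum.elim (0 : V₁ → ℝ) (0 : V₂ → ℝ))) (Sum.inr (Sum.inr (Sum.inr w₂))) -
          Sum.elim (0 : V → ℝ) (Sum.elim Y (Sum.elim (0 : V₁ → ℝ) (0 : V₂ → ℝ))) (Sum.inr (Sum.inl f)) else 0) =
        -(Y f) := by
      intro f; simp [qDoubleJoin, doubleJoin, djRel]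
    have hC : ∀ u : V₁, (if (qDoubleJoin G G₁ G₂).Adj (Sum.inr (Sum.inr (Sum.inr w₂)))
        (Sum.inr (Sum.inr (Sum.inl u))) then
        Sum.elim (0 : V → ℝ) (Sum.elim Y (Sum.elim (0 : V₁ → ℝ) (0 : V₂ → ℝ))) (Sum.inr (Sum.inr (Sum.inr w₂))) -
          Sum.elim (0 : V → ℝ) (Sum.elim Y (Sum.elim (0 : V₁ → ℝ) (0 : V₂ → ℝ))) (Sum.inr (Sum.inr (Sum.inl u)))
        else 0) = 0 := by
      intro u; simp
    have hD : ∀ u : V₂, (if (qDoubleJoin G G₁ G₂).Adj (Sum.inr (Sum.inr (Sum.inr w₂)))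
        (Sum.inr (Sum.inr (Sum.inr u))) then
        Sum.elim (0 : V → ℝ) (Sum.elim Y (Sum.elim (0 : V₁ → ℝ) (0 : V₂ → ℝ))) (Sum.inr (Sum.inr (Sum.inr w₂))) -
          Sum.elim (0 : V → ℝ) (Sum.elim Y (Sum.elim (0 : V₁ → ℝ) (0 : V₂ → ℝ))) (Sum.inr (Sum.inr (Sum.inr u)))
        else 0) = 0 := by
      intro u; simp
    simp only [hA, hB, hC, hD, Finset.sum_const_zero, Finset.sum_neg_distrib, h2]
    simp

end Aux

theorem stmt_15 {V V₁ V₂ : Type*} [Fintype V] [DecidableEq V] [Fintype V₁] [DecidableEq V₁]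
    [Fintype V₂] [DecidableEq V₂]
    (G : SimpleGraph V) [DecidableRel G.Adj] [Fintype G.edgeSet]
    (G₁ : SimpleGraph V₁) (G₂ : SimpleGraph V₂)
    (k : ℕ) (hreg : G.IsRegularOfDegree k) (hconn : G.Connected)
    (hmn : Fintype.card V < Fintype.card G.edgeSet) :
    (Fintype.card G.edgeSet - Fintype.card V ≤
        Module.finrank ℝ
          (Module.End.eigenspace (Matrix.mulVecLin (lapR (qDoubleJoin G G₁ G₂)))
            ((Fintype.card V₂ : ℝ) + 2 * (k : ℝ) + 2))) ∧
      ∀ Y : G.edgeSet → ℝ, edgeIncMatrix G *ᵥ Y = 0 → (∑ e, Y e = 0) → Y ≠ 0 →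
        (Sum.elim (0 : V → ℝ) (Sum.elim Y (Sum.elim (0 : V₁ → ℝ) (0 : V₂ → ℝ))) ≠ 0) ∧
          lapR (qDoubleJoin G G₁ G₂) *ᵥ
            Sum.elim (0 : V → ℝ) (Sum.elim Y (Sum.elim (0 : V₁ → ℝ) (0 : V₂ → ℝ))) =
          ((Fintype.card V₂ : ℝ) + 2 * (k : ℝ) + 2) •
            Sum.elim (0 : V → ℝ) (Sum.elim Y (Sum.elim (0 : V₁ → ℝ) (0 : V₂ → ℝ))) := by
  classical
  let φ : (G.edgeSet → ℝ) →ₗ[ℝ] ((V ⊕ (G.edgeSet ⊕ (V₁ ⊕ V₂))) → ℝ) :=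
    { toFun := fun Y => Sum.elim (0 : V → ℝ) (Sum.elim Y (Sum.elim (0 : V₁ → ℝ) (0 : V₂ → ℝ)))
      map_add' := by
        intro Y Z; funext w; rcases w with v | e | a | b <;> simp
      map_smul' := by
        intro c Y; funext w; rcases w with v | e | a | b <;> simp }
  constructor
  · have hinj : Function.Injective φ := by
      intro Y Z h
      funext e
      have := congrFun h (Sum.inr (Sum.inl e))
      simpa [φ] using this
    set K := LinearMap.ker (edgeIncMatrix G).mulVecLin with hK
    have hmap : K.map φ ≤ Module.End.eigenspace (mulVecLin (lapR (qDoubleJoin G G₁ G₂)))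
        ((Fintype.card V₂ : ℝ) + 2 * (k : ℝ) + 2) := by
      rintro x ⟨Y, hY, rfl⟩
      rw [Module.End.mem_eigenspace_iff]
      have hY0 : edgeIncMatrix G *ᵥ Y = 0 := by
        have := LinearMap.mem_ker.mp hY
        rwa [mulVecLin_apply] at this
      simp only [mulVecLin_apply]
      exact key_mulVec G G₁ G₂ Y hreg hY0
    have e1 : Module.finrank ℝ K = Module.finrank ℝ (K.map φ) :=
      (Submodule.equivMapOfInjective φ hinj K).finrank_eq
    have e2 : Module.finrank ℝ (K.map φ) ≤ Module.finrank ℝ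
        (Module.End.eigenspace (mulVecLin (lapR (qDoubleJoin G G₁ G₂)))
          ((Fintype.card V₂ : ℝ) + 2 * (k : ℝ) + 2)) :=
      Submodule.finrank_mono hmap
    have e3 : Fintype.card G.edgeSet - Fintype.card V ≤ Module.finrank ℝ K := by
      rw [hK]
      have hrn := LinearMap.finrank_range_add_finrank_ker (edgeIncMatrix G).mulVecLin
      have hle : Module.finrank ℝ (LinearMap.range (edgeIncMatrix G).mulVecLin) ≤
          Fintype.card V := by
        have := Submodule.finrank_le (LinearMap.range (edgeIncMatrix G).mulVecLin)
        rwa [Module.finrank_pi] at this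
      rw [Module.finrank_pi] at hrn
      omega
    exact le_trans e3 (le_trans (le_of_eq e1) e2)
  · intro Y hY hsum hY0
    refine ⟨?_, key_mulVec G G₁ G₂ Y hreg hY⟩
    intro h
    apply hY0
    funext e
    have := congrFun h (Sum.inr (Sum.inl e))
    simpa using this
end

section
/- If G and H are Laplacian cospectral k-regular graphs on n vertices and m edges, G₁ is Laplacian cospectral with H₁, and G₂ is Laplacian cospectral with H₂, then the subdivision double joins G^S∨(G₁•, G₂∘) and H^S∨(H₁•, H₂∘) are Laplacian cospectral. -/
open Matrix SimpleGraph

/-- Two graphs are Laplacian cospectral if their (real) Laplacian matrices have the same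
characteristic polynomial, i.e. the same multiset of eigenvalues counted with multiplicity. -/
def IsLapCospectral {W W' : Type*} [Fintype W] [DecidableEq W] [Fintype W'] [DecidableEq W']
    (H : SimpleGraph W) (H' : SimpleGraph W') : Prop :=
  (lapR H).charpoly = (lapR H').charpoly


set_option synthInstance.maxHeartbeats 1000000
set_option maxHeartbeats 8000000
set_option linter.unusedSectionVars false
set_option linter.unusedTactic false
set_option linter.unreachableTactic false
open Polynomial
noncomputable section
namespace SDJ
abbrev K : Type := RatFunc ℝ
def φ : Polynomial ℝ →+* K := algebraMap _ _
def ψ : ℝ →+* K := φ.comp Polynomial.C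
def x : K := φ Polynomial.X

lemma φ_inj : Function.Injective φ := RatFunc.algebraMap_injective ℝ

lemma det_smul_one_sub_map {W : Type*} [Fintype W] [DecidableEq W] (M : Matrix W W ℝ) (z : K) :
    Matrix.det (z • (1 : Matrix W W K) - M.map ψ) = ((M.charpoly).map ψ).eval z := by
  rw [Polynomial.eval_map, Matrix.charpoly]
  rw [show Polynomial.eval₂ ψ z M.charmatrix.det = (Polynomial.eval₂RingHom ψ z) M.charmatrix.det from rfl]
  rw [RingHom.map_det]
  congr 1
  ext i j
  by_cases h : i = j
  · subst h
    simp [Matrix.map_apply, Matrix.charmatrix_apply_eq, Matrix.one_apply_eq]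
  · simp [Matrix.map_apply, Matrix.charmatrix_apply_ne _ _ _ h, Matrix.one_apply_ne h, h]

lemma φ_eq_eval (p : Polynomial ℝ) : φ p = (p.map ψ).eval x := by
  rw [Polynomial.eval_map]
  have h := Polynomial.hom_eval₂ p Polynomial.C φ Polynomial.X
  rw [Polynomial.eval₂_C_X] at h
  exact h

lemma X_sub_C_map (c : ℝ) : x - ψ c = φ (Polynomial.X - Polynomial.C c) := by
  simp [x, ψ, map_sub]

lemma det_shift_ne_zero {W : Type*} [Fintype W] [DecidableEq W] (M : Matrix W W ℝ) (c : ℝ) :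
    Matrix.det ((x - ψ c) • (1 : Matrix W W K) - M.map ψ) ≠ 0 := by
  have h1 : (x - ψ c) • (1 : Matrix W W K) - M.map ψ
      = x • (1 : Matrix W W K) - (M + c • 1).map ψ := by
    ext i j
    by_cases h : i = j <;>
      simp [Matrix.map_apply, Matrix.one_apply, h, sub_smul, map_add, Matrix.smul_apply]
    ring
  rw [h1, det_smul_one_sub_map, ← φ_eq_eval]
  intro hc
  exact (Matrix.charpoly_monic _).ne_zero (φ_inj (by rw [hc, map_zero]))



open Classical in
/-- adjacency indicator -/
noncomputable def aind {W : Type*} (H : SimpleGraph W) (i j : W) : ℝ :=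
  if H.Adj i j then 1 else 0

lemma aind_pos {W : Type*} {H : SimpleGraph W} {i j : W} (h : H.Adj i j) : aind H i j = 1 := by
  simp [aind, h]

lemma aind_neg {W : Type*} {H : SimpleGraph W} {i j : W} (h : ¬ H.Adj i j) : aind H i j = 0 := by
  simp [aind, h]

lemma aind_symm {W : Type*} (H : SimpleGraph W) (i j : W) : aind H i j = aind H j i := by
  by_cases h : H.Adj i j
  · rw [aind_pos h, aind_pos h.symm]
  · rw [aind_neg h, aind_neg fun hs => h hs.symm]

lemma lapR_off {W : Type*} [Fintype W] [DecidableEq W] (H : SimpleGraph W) {i j : W}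
    (h : i ≠ j) : lapR H i j = - aind H i j := by
  rw [lapR]
  letI := Classical.decRel H.Adj
  rw [SimpleGraph.lapMatrix, Matrix.sub_apply, SimpleGraph.degMatrix,
    Matrix.diagonal_apply_ne _ h]
  by_cases ha : H.Adj i j
  · simp [ha, aind_pos ha]
  · simp [ha, aind_neg ha]

lemma lapR_diag {W : Type*} [Fintype W] [DecidableEq W] (H : SimpleGraph W) (i : W) :
    lapR H i i = ∑ j, aind H i j := by
  letI inst := Classical.decRel H.Adj
  rw [lapR]
  rw [SimpleGraph.lapMatrix, Matrix.sub_apply, SimpleGraph.degMatrix,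
    Matrix.diagonal_apply_eq]
  rw [SimpleGraph.degree_eq_sum_if_adj (R := ℝ) (G := H) (i := i)]
  have : (H.adjMatrix ℝ) i i = 0 := by simp
  rw [this, sub_zero]
  refine Finset.sum_congr rfl fun j _ => ?_
  by_cases h : H.Adj i j
  · simp [h, aind_pos h]
  · simp [h, aind_neg h]

lemma lapR_rowsum {W : Type*} [Fintype W] [DecidableEq W] (H : SimpleGraph W) (i : W) :
    ∑ j, lapR H i j = 0 := by
  rw [lapR]
  letI := Classical.decRel H.Adj
  have := congrFun (SimpleGraph.lapMatrix_mulVec_const_eq_zero (R := ℝ) (G := H)) i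
  simpa [Matrix.mulVec, dotProduct] using this

lemma lapR_colsum {W : Type*} [Fintype W] [DecidableEq W] (H : SimpleGraph W) (j : W) :
    ∑ i, lapR H i j = 0 := by
  have hs : ∀ i, lapR H i j = lapR H j i := by
    intro i
    rw [lapR]
    letI := Classical.decRel H.Adj
    exact congrFun (congrFun (SimpleGraph.isSymm_lapMatrix (R := ℝ) (G := H)).symm j) i |>.symm
  simp_rw [hs]
  exact lapR_rowsum H j

section counting
variable {V : Type*} [Fintype V] [DecidableEq V] (G : SimpleGraph V) [DecidableRel G.Adj]
  [Fintype G.edgeSet]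
variable {R : Type*} [NonAssocSemiring R]

lemma sum_inc_row (v : V) :
    ∑ e : G.edgeSet, (if v ∈ (e : Sym2 V) then (1:R) else 0) = (G.degree v : R) := by
  rw [Finset.sum_boole]
  norm_cast
  have h1 : (Finset.filter (fun e : G.edgeSet => v ∈ (e : Sym2 V)) Finset.univ).card
      = Fintype.card {e : G.edgeSet // v ∈ (e : Sym2 V)} := (Fintype.card_subtype _).symm
  have h2 : Fintype.card {e : G.edgeSet // v ∈ (e : Sym2 V)}
      = Fintype.card (G.incidenceSet v) := by
    refine Fintype.card_congr ⟨fun p => ⟨(p.1 : Sym2 V), p.1.2, p.2⟩,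
      fun p => ⟨⟨(p : Sym2 V), p.2.1⟩, p.2.2⟩, fun p => by ext; rfl, fun p => by ext; rfl⟩
  rw [h1, h2, SimpleGraph.card_incidenceSet_eq_degree]

lemma sum_inc_col (e : G.edgeSet) :
    ∑ v : V, (if v ∈ (e : Sym2 V) then (1:R) else 0) = 2 := by
  obtain ⟨e, he⟩ := e
  induction e with
  | _ a b =>
    have hab : a ≠ b := (G.mem_edgeSet.mp he).ne
    rw [Finset.sum_boole]
    have : Finset.filter (fun v => v ∈ s(a, b)) Finset.univ = {a, b} := by
      ext v; simp [Sym2.mem_iff]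
    rw [this, Finset.card_insert_of_notMem (by simp [hab]), Finset.card_singleton]
    norm_cast

lemma sum_inc_two {u w : V} (h : u ≠ w) :
    ∑ e : G.edgeSet, (if u ∈ (e : Sym2 V) then (1:R) else 0) *
      (if w ∈ (e : Sym2 V) then (1:R) else 0) = if G.Adj u w then (1:R) else 0 := by
  have hterm : ∀ e : G.edgeSet,
      (if u ∈ (e : Sym2 V) then (1:R) else 0) * (if w ∈ (e : Sym2 V) then (1:R) else 0)
        = if (e : Sym2 V) = s(u, w) then (1:R) else 0 := by
    intro e
    by_cases hu : u ∈ (e : Sym2 V) <;> by_cases hw : w ∈ (e : Sym2 V) <;>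
      simp [hu, hw, ← Sym2.mem_and_mem_iff h] <;> tauto
  rw [Finset.sum_congr rfl fun e _ => hterm e]
  by_cases hadj : G.Adj u w
  · have : ∀ e : G.edgeSet, ((e : Sym2 V) = s(u,w)) ↔ e = (⟨s(u,w), G.mem_edgeSet.mpr hadj⟩ : G.edgeSet) := by
      intro e; rw [Subtype.ext_iff]
    simp_rw [this]
    rw [Finset.sum_ite_eq' Finset.univ]
    simp [hadj]
  · rw [if_neg hadj]
    refine Finset.sum_eq_zero fun e _ => ?_
    rw [if_neg]
    intro hc
    exact hadj (G.mem_edgeSet.mp (hc ▸ e.2))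

end counting



section
variable {V V₁ V₂ : Type*} (G : SimpleGraph V) (G₁ : SimpleGraph V₁) (G₂ : SimpleGraph V₂)

lemma adj_VV (u v : V) : ¬ (subdivisionDoubleJoin G G₁ G₂).Adj (.inl u) (.inl v) := by
  simp [subdivisionDoubleJoin, doubleJoin, SimpleGraph.fromRel_adj, djRel]

lemma adj_VE (v : V) (e : G.edgeSet) :
    (subdivisionDoubleJoin G G₁ G₂).Adj (.inl v) (.inr (.inl e)) ↔ v ∈ (e : Sym2 V) := by
  simp [subdivisionDoubleJoin, doubleJoin, SimpleGraph.fromRel_adj, djRel]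

lemma adj_VV1 (v : V) (u : V₁) :
    (subdivisionDoubleJoin G G₁ G₂).Adj (.inl v) (.inr (.inr (.inl u))) := by
  simp [subdivisionDoubleJoin, doubleJoin, SimpleGraph.fromRel_adj, djRel]

lemma adj_VV2 (v : V) (w : V₂) :
    ¬ (subdivisionDoubleJoin G G₁ G₂).Adj (.inl v) (.inr (.inr (.inr w))) := by
  simp [subdivisionDoubleJoin, doubleJoin, SimpleGraph.fromRel_adj, djRel]

lemma adj_EE (e f : G.edgeSet) :
    ¬ (subdivisionDoubleJoin G G₁ G₂).Adj (.inr (.inl e)) (.inr (.inl f)) := by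
  simp [subdivisionDoubleJoin, doubleJoin, SimpleGraph.fromRel_adj, djRel]

lemma adj_EV1 (e : G.edgeSet) (u : V₁) :
    ¬ (subdivisionDoubleJoin G G₁ G₂).Adj (.inr (.inl e)) (.inr (.inr (.inl u))) := by
  simp [subdivisionDoubleJoin, doubleJoin, SimpleGraph.fromRel_adj, djRel]

lemma adj_EV2 (e : G.edgeSet) (w : V₂) :
    (subdivisionDoubleJoin G G₁ G₂).Adj (.inr (.inl e)) (.inr (.inr (.inr w))) := by
  simp [subdivisionDoubleJoin, doubleJoin, SimpleGraph.fromRel_adj, djRel]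

lemma adj_V1V1 (u u' : V₁) :
    (subdivisionDoubleJoin G G₁ G₂).Adj (.inr (.inr (.inl u))) (.inr (.inr (.inl u'))) ↔
      G₁.Adj u u' := by
  simp only [subdivisionDoubleJoin, doubleJoin, SimpleGraph.fromRel_adj, djRel]
  constructor
  · rintro ⟨-, h | h⟩; exact h; exact h.symm
  · intro h; exact ⟨by simp [h.ne], Or.inl h⟩

lemma adj_V1V2 (u : V₁) (w : V₂) :
    ¬ (subdivisionDoubleJoin G G₁ G₂).Adj (.inr (.inr (.inl u))) (.inr (.inr (.inr w))) := by
  simp [subdivisionDoubleJoin, doubleJoin, SimpleGraph.fromRel_adj, djRel]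

lemma adj_V2V2 (w w' : V₂) :
    (subdivisionDoubleJoin G G₁ G₂).Adj (.inr (.inr (.inr w))) (.inr (.inr (.inr w'))) ↔
      G₂.Adj w w' := by
  simp only [subdivisionDoubleJoin, doubleJoin, SimpleGraph.fromRel_adj, djRel]
  constructor
  · rintro ⟨-, h | h⟩; exact h; exact h.symm
  · intro h; exact ⟨by simp [h.ne], Or.inl h⟩
end

section entries
open Sum
variable {V V₁ V₂ : Type*} [Fintype V] [DecidableEq V] [Fintype V₁] [DecidableEq V₁]
  [Fintype V₂] [DecidableEq V₂]
  (G : SimpleGraph V) [DecidableRel G.Adj] [Fintype G.edgeSet]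
  (G₁ : SimpleGraph V₁) (G₂ : SimpleGraph V₂)

lemma lapR_symm {W : Type*} [Fintype W] [DecidableEq W] (H : SimpleGraph W) (i j : W) :
    lapR H i j = lapR H j i := by
  by_cases h : i = j
  · rw [h]
  · rw [lapR_off H h, lapR_off H (Ne.symm h), aind_symm]

lemma aind_VE (v : V) (e : G.edgeSet) :
    aind (subdivisionDoubleJoin G G₁ G₂) (inl v) (inr (inl e))
      = if v ∈ (e : Sym2 V) then 1 else 0 := by
  by_cases h : v ∈ (e : Sym2 V)
  · rw [aind_pos ((adj_VE G G₁ G₂ v e).mpr h), if_pos h]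
  · rw [aind_neg (fun hc => h ((adj_VE G G₁ G₂ v e).mp hc)), if_neg h]

lemma aind_V1V1 (u u' : V₁) :
    aind (subdivisionDoubleJoin G G₁ G₂) (inr (inr (inl u))) (inr (inr (inl u')))
      = aind G₁ u u' := by
  by_cases h : G₁.Adj u u'
  · rw [aind_pos ((adj_V1V1 G G₁ G₂ u u').mpr h), aind_pos h]
  · rw [aind_neg (fun hc => h ((adj_V1V1 G G₁ G₂ u u').mp hc)), aind_neg h]

lemma aind_V2V2 (w w' : V₂) :
    aind (subdivisionDoubleJoin G G₁ G₂) (inr (inr (inr w))) (inr (inr (inr w')))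
      = aind G₂ w w' := by
  by_cases h : G₂.Adj w w'
  · rw [aind_pos ((adj_V2V2 G G₁ G₂ w w').mpr h), aind_pos h]
  · rw [aind_neg (fun hc => h ((adj_V2V2 G G₁ G₂ w w').mp hc)), aind_neg h]

lemma L_VV {k : ℕ} (hreg : G.IsRegularOfDegree k) (u v : V) :
    lapR (subdivisionDoubleJoin G G₁ G₂) (inl u) (inl v)
      = if u = v then ((k : ℝ) + (Fintype.card V₁ : ℝ)) else 0 := by
  by_cases h : u = v
  · subst h
    rw [if_pos rfl, lapR_diag]
    rw [Fintype.sum_sum_type]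
    simp only [Fintype.sum_sum_type]
    rw [Finset.sum_eq_zero (fun v _ => aind_neg (adj_VV G G₁ G₂ u v))]
    rw [Finset.sum_congr rfl (fun e _ => aind_VE G G₁ G₂ u e)]
    rw [Finset.sum_eq_zero (fun w _ => aind_neg (adj_VV2 G G₁ G₂ u w))]
    rw [Finset.sum_congr rfl (fun u' _ => aind_pos (adj_VV1 G G₁ G₂ u u'))]
    rw [sum_inc_row, hreg u]
    simp [Finset.card_univ]
  · rw [if_neg h, lapR_off _ (by simp [h]), aind_neg (adj_VV G G₁ G₂ u v), neg_zero]

lemma L_VE (v : V) (e : G.edgeSet) :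
    lapR (subdivisionDoubleJoin G G₁ G₂) (inl v) (inr (inl e))
      = - (if v ∈ (e : Sym2 V) then 1 else 0) := by
  rw [lapR_off _ (by simp), aind_VE]

lemma L_VV1 (v : V) (u : V₁) :
    lapR (subdivisionDoubleJoin G G₁ G₂) (inl v) (inr (inr (inl u))) = -1 := by
  rw [lapR_off _ (by simp), aind_pos (adj_VV1 G G₁ G₂ v u)]

lemma L_VV2 (v : V) (w : V₂) :
    lapR (subdivisionDoubleJoin G G₁ G₂) (inl v) (inr (inr (inr w))) = 0 := by
  rw [lapR_off _ (by simp), aind_neg (adj_VV2 G G₁ G₂ v w), neg_zero]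

lemma L_EE (e f : G.edgeSet) :
    lapR (subdivisionDoubleJoin G G₁ G₂) (inr (inl e)) (inr (inl f))
      = if e = f then (2 + (Fintype.card V₂ : ℝ)) else 0 := by
  by_cases h : e = f
  · subst h
    rw [if_pos rfl, lapR_diag]
    rw [Fintype.sum_sum_type]
    simp only [Fintype.sum_sum_type]
    rw [Finset.sum_congr rfl (fun v _ => by
      rw [aind_symm, aind_VE G G₁ G₂ v e])]
    rw [Finset.sum_eq_zero (fun f _ => aind_neg (adj_EE G G₁ G₂ e f))]
    rw [Finset.sum_eq_zero (fun u _ => aind_neg (adj_EV1 G G₁ G₂ e u))]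
    rw [Finset.sum_congr rfl (fun w _ => aind_pos (adj_EV2 G G₁ G₂ e w))]
    rw [sum_inc_col]
    simp [Finset.card_univ]
  · rw [if_neg h, lapR_off _ (by simp [h]), aind_neg (adj_EE G G₁ G₂ e f), neg_zero]

lemma L_EV1 (e : G.edgeSet) (u : V₁) :
    lapR (subdivisionDoubleJoin G G₁ G₂) (inr (inl e)) (inr (inr (inl u))) = 0 := by
  rw [lapR_off _ (by simp), aind_neg (adj_EV1 G G₁ G₂ e u), neg_zero]

lemma L_EV2 (e : G.edgeSet) (w : V₂) :
    lapR (subdivisionDoubleJoin G G₁ G₂) (inr (inl e)) (inr (inr (inr w))) = -1 := by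
  rw [lapR_off _ (by simp), aind_pos (adj_EV2 G G₁ G₂ e w)]

lemma L_V1V1 (u u' : V₁) :
    lapR (subdivisionDoubleJoin G G₁ G₂) (inr (inr (inl u))) (inr (inr (inl u')))
      = lapR G₁ u u' + (if u = u' then (Fintype.card V : ℝ) else 0) := by
  by_cases h : u = u'
  · subst h
    rw [if_pos rfl, lapR_diag, lapR_diag]
    rw [Fintype.sum_sum_type]
    simp only [Fintype.sum_sum_type]
    rw [Finset.sum_congr rfl (fun v _ => by
      rw [aind_symm, aind_pos (adj_VV1 G G₁ G₂ v u)])]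
    rw [Finset.sum_eq_zero (fun e _ => aind_neg
      (fun hc => (adj_EV1 G G₁ G₂ e u) hc.symm))]
    rw [Finset.sum_eq_zero (fun w _ => aind_neg (adj_V1V2 G G₁ G₂ u w))]
    rw [Finset.sum_congr rfl (fun u' _ => aind_V1V1 G G₁ G₂ u u')]
    simp [Finset.card_univ, add_comm]
  · rw [if_neg h, lapR_off _ (by simp [h]), lapR_off _ h, aind_V1V1, add_zero]

lemma L_V1V2 (u : V₁) (w : V₂) :
    lapR (subdivisionDoubleJoin G G₁ G₂) (inr (inr (inl u))) (inr (inr (inr w))) = 0 := by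
  rw [lapR_off _ (by simp), aind_neg (adj_V1V2 G G₁ G₂ u w), neg_zero]

lemma L_V2V2 (w w' : V₂) :
    lapR (subdivisionDoubleJoin G G₁ G₂) (inr (inr (inr w))) (inr (inr (inr w')))
      = lapR G₂ w w' + (if w = w' then (Fintype.card G.edgeSet : ℝ) else 0) := by
  by_cases h : w = w'
  · subst h
    rw [if_pos rfl, lapR_diag, lapR_diag]
    rw [Fintype.sum_sum_type]
    simp only [Fintype.sum_sum_type]
    rw [Finset.sum_eq_zero (fun v _ => aind_neg
      (fun hc => (adj_VV2 G G₁ G₂ v w) hc.symm))]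
    rw [Finset.sum_congr rfl (fun e _ => by
      rw [aind_symm, aind_pos (adj_EV2 G G₁ G₂ e w)])]
    rw [Finset.sum_eq_zero (fun u _ => aind_neg
      (fun hc => (adj_V1V2 G G₁ G₂ u w) hc.symm))]
    rw [Finset.sum_congr rfl (fun w' _ => aind_V2V2 G G₁ G₂ w w')]
    simp [Finset.card_univ, add_comm]
  · rw [if_neg h, lapR_off _ (by simp [h]), lapR_off _ h, aind_V2V2, add_zero]

end entries


/-- all-ones matrix -/
def Jm (p q : Type*) : Matrix p q K := Matrix.of fun _ _ => 1

lemma Jm_mul_Jm (p q r : Type*) [Fintype q] :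
    Jm p q * Jm q r = (Fintype.card q : K) • Jm p r := by
  ext i j; simp [Jm, Matrix.mul_apply, Finset.card_univ]

lemma det_one_add_smul_Jm (W : Type*) [Fintype W] [DecidableEq W] (c : K) :
    Matrix.det (1 + c • Jm W W) = 1 + (Fintype.card W : K) * c := by
  have h : c • Jm W W = Matrix.replicateCol Unit (fun _ => c) * Matrix.replicateRow Unit (fun _ => (1:K)) := by
    ext i j; simp [Jm, Matrix.mul_apply]
  rw [h, Matrix.det_one_add_replicateCol_mul_replicateRow]
  simp [dotProduct, Finset.card_univ, mul_comm]

/-- absorption of the all-ones perturbation for matrices annihilating constants -/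
lemma det_smul_one_add_Jm_add (W : Type*) [Fintype W] [DecidableEq W] (A : Matrix W W K)
    (hA : ∀ j, ∑ i, A i j = 0) (α β : K) (hα : α ≠ 0) :
    Matrix.det (α • 1 + β • Jm W W + A)
      = (α + β * (Fintype.card W : K)) / α * Matrix.det (α • 1 + A) := by
  have hJA : Jm W W * A = 0 := by
    ext i j; simpa [Jm, Matrix.mul_apply] using hA j
  have key : (1 + (β/α) • Jm W W) * (α • 1 + A) = α • 1 + β • Jm W W + A := by
    rw [Matrix.add_mul, Matrix.one_mul, Matrix.smul_mul, Matrix.mul_add, hJA, Matrix.mul_smul,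
      Matrix.mul_one]
    rw [add_zero, smul_smul, div_mul_cancel₀ _ hα]
    abel
  have := congrArg Matrix.det key
  rw [Matrix.det_mul, det_one_add_smul_Jm] at this
  have hsc : (α + β * (Fintype.card W : K)) / α = 1 + (Fintype.card W : K) * (β / α) := by
    field_simp
  rw [← this, hsc]
lemma sum_aind_degree {W : Type*} [Fintype W] (H : SimpleGraph W) [DecidableRel H.Adj] (i : W) :
    ∑ j, aind H i j = (H.degree i : ℝ) := by
  rw [SimpleGraph.degree_eq_sum_if_adj (R := ℝ) (G := H) (i := i)]
  refine Finset.sum_congr rfl fun j _ => ?_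
  by_cases h : H.Adj i j
  · simp [h, aind_pos h]
  · simp [h, aind_neg h]

lemma quad_ne_zero (r s c : ℝ) :
    (Polynomial.X - Polynomial.C r) * (Polynomial.X - Polynomial.C s) - Polynomial.C c ≠ 0 := by
  intro h
  have h2 : (Polynomial.X - Polynomial.C r) * (Polynomial.X - Polynomial.C s)
      = Polynomial.C c := by linear_combination h
  have := congrArg Polynomial.natDegree h2
  rw [Polynomial.natDegree_mul (Polynomial.X_sub_C_ne_zero r) (Polynomial.X_sub_C_ne_zero s),
    Polynomial.natDegree_X_sub_C, Polynomial.natDegree_X_sub_C, Polynomial.natDegree_C] at this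
  omega

lemma φ_ne_zero {p : Polynomial ℝ} (hp : p ≠ 0) : φ p ≠ 0 :=
  fun hc => hp (φ_inj (by rw [hc, map_zero]))

lemma x_sub_cast (c : ℕ) : x - (c : K) = φ (Polynomial.X - Polynomial.C (c : ℝ)) := by
  rw [← X_sub_C_map]
  simp [map_natCast]

lemma x_sub_cast_ne (c : ℕ) : x - (c : K) ≠ 0 := by
  rw [x_sub_cast]
  exact φ_ne_zero (Polynomial.X_sub_C_ne_zero _)

lemma colsum_D {W : Type*} [Fintype W] [DecidableEq W] (H : SimpleGraph W) (z : K) (w : W) :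
    ∑ i, (z • (1 : Matrix W W K) - (lapR H).map ψ) i w = z := by
  simp only [Matrix.sub_apply, Matrix.smul_apply, Matrix.one_apply, Matrix.map_apply]
  rw [Finset.sum_sub_distrib, ← map_sum, lapR_colsum, map_zero, sub_zero]
  simp [Finset.sum_ite_eq, mul_ite]

section main
open Sum
variable {V V₁ V₂ : Type*} [Fintype V] [DecidableEq V] [Fintype V₁] [DecidableEq V₁]
  [Fintype V₂] [DecidableEq V₂]
  (G : SimpleGraph V) [DecidableRel G.Adj] [Fintype G.edgeSet]
  (G₁ : SimpleGraph V₁) (G₂ : SimpleGraph V₂)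

def σf : (((V ⊕ G.edgeSet) ⊕ V₁) ⊕ V₂) → (V ⊕ (G.edgeSet ⊕ (V₁ ⊕ V₂)))
  | .inl (.inl (.inl v)) => .inl v
  | .inl (.inl (.inr e)) => .inr (.inl e)
  | .inl (.inr u) => .inr (.inr (.inl u))
  | .inr w => .inr (.inr (.inr w))

def σequiv : (((V ⊕ G.edgeSet) ⊕ V₁) ⊕ V₂) ≃ (V ⊕ (G.edgeSet ⊕ (V₁ ⊕ V₂))) where
  toFun := σf G
  invFun := fun i => match i with
    | .inl v => .inl (.inl (.inl v))
    | .inr (.inl e) => .inl (.inl (.inr e))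
    | .inr (.inr (.inl u)) => .inl (.inr u)
    | .inr (.inr (.inr w)) => .inr w
  left_inv := by rintro (((v|e)|u)|w) <;> rfl
  right_inv := by rintro (v|(e|(u|w))) <;> rfl

def BmK : Matrix V G.edgeSet K := Matrix.of fun v e => if v ∈ (e : Sym2 V) then 1 else 0
def CmK : Matrix G.edgeSet V K := Matrix.of fun e v => if v ∈ (e : Sym2 V) then 1 else 0
def P2mat : Matrix (V ⊕ G.edgeSet) V₁ K :=
  Matrix.of fun i _ => match i with | .inl _ => 1 | .inr _ => 0
def Q2mat : Matrix V₁ (V ⊕ G.edgeSet) K :=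
  Matrix.of fun _ j => match j with | .inl _ => 1 | .inr _ => 0
def P1mat : Matrix ((V ⊕ G.edgeSet) ⊕ V₁) V₂ K :=
  Matrix.of fun i _ => match i with | .inl (.inr _) => 1 | _ => 0
def Q1mat : Matrix V₂ ((V ⊕ G.edgeSet) ⊕ V₁) K :=
  Matrix.of fun _ j => match j with | .inl (.inr _) => 1 | _ => 0

end main


/-- The explicit formula. -/
def formula (k n m n₁ n₂ : ℕ) (pG p₁ p₂ : Polynomial ℝ) : K :=
  let a : K := x - ((k : K) + (n₁ : K));
  let b : K := x - (2 + (n₂ : K));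
  let c₁ : K := (n₁ : K) / (x - (n : K));
  let c₂ : K := (n₂ : K) / (x - (m : K));
  let t : K := c₂ / (b * (b - c₂ * (m : K)));
  let α : K := a - 2 * (k : K) / b;
  let β : K := c₁ + (k : K) ^ 2 * t;
  ((p₂.map ψ).eval (x - (m : K))) * ((p₁.map ψ).eval (x - (n : K)))
    * ((b - c₂ * (m : K)) * b ^ m / b)
    * ((α - β * (n : K)) / α * ((-b⁻¹) ^ n * ((pG.map ψ).eval (2 * (k : K) - a * b))))

theorem main {V V₁ V₂ : Type*} [Fintype V] [DecidableEq V] [Fintype V₁] [DecidableEq V₁]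
    [Fintype V₂] [DecidableEq V₂]
    (G : SimpleGraph V) [DecidableRel G.Adj] [Fintype G.edgeSet]
    (G₁ : SimpleGraph V₁) (G₂ : SimpleGraph V₂) (k : ℕ) (hreg : G.IsRegularOfDegree k) :
    φ (lapR (subdivisionDoubleJoin G G₁ G₂)).charpoly
      = formula k (Fintype.card V) (Fintype.card G.edgeSet) (Fintype.card V₁) (Fintype.card V₂)
        (lapR G).charpoly (lapR G₁).charpoly (lapR G₂).charpoly := by
  classical
  set nn := Fintype.card V with hnn
  set mm := Fintype.card G.edgeSet with hmm
  set q₁ := Fintype.card V₁ with hq₁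
  set q₂ := Fintype.card V₂ with hq₂
  set a : K := x - ((k : K) + (q₁ : K)) with ha
  set b : K := x - (2 + (q₂ : K)) with hb
  set c₁ : K := (q₁ : K) / (x - (nn : K)) with hc₁
  set c₂ : K := (q₂ : K) / (x - (mm : K)) with hc₂
  set tt : K := c₂ / (b * (b - c₂ * (mm : K))) with htt
  set av : K := a - 2 * (k : K) / b with hav
  set bv : K := c₁ + (k : K) ^ 2 * tt with hbv
  -- nonzero scalars
  have hxm : x - (mm : K) ≠ 0 := x_sub_cast_ne mm
  have hxn : x - (nn : K) ≠ 0 := x_sub_cast_ne nn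
  have hbne : b ≠ 0 := by
    rw [hb, show (2 + (q₂ : K)) = ((2 + q₂ : ℕ) : K) by push_cast; ring]
    exact x_sub_cast_ne _
  have hc₂x : c₂ * (x - (mm : K)) = (q₂ : K) := by
    rw [hc₂]; field_simp
  have hbc : b - c₂ * (mm : K) ≠ 0 := by
    intro h0
    have h1 : (b - c₂ * (mm : K)) * (x - (mm : K)) = b * (x - (mm : K)) - (mm : K) * (q₂ : K) := by
      linear_combination (-(mm : K)) * hc₂x
    have h2 : b * (x - (mm : K)) - (mm : K) * (q₂ : K)
        = φ ((Polynomial.X - Polynomial.C ((2 + q₂ : ℕ) : ℝ)) * (Polynomial.X - Polynomial.C ((mm : ℕ) : ℝ))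
            - Polynomial.C ((mm : ℝ) * (q₂ : ℝ))) := by
      rw [map_sub, _root_.map_mul, ← x_sub_cast, ← x_sub_cast]
      rw [show x - ((2 + q₂ : ℕ) : K) = b by rw [hb]; push_cast; ring]
      rw [show φ (Polynomial.C ((mm : ℝ) * (q₂ : ℝ))) = (mm : K) * (q₂ : K) by
        rw [show φ (Polynomial.C ((mm : ℝ) * (q₂ : ℝ))) = ψ ((mm : ℝ) * (q₂ : ℝ)) from rfl,
          _root_.map_mul, map_natCast, map_natCast]]
    rw [h0, zero_mul] at h1
    exact φ_ne_zero (quad_ne_zero _ _ _) (by rw [← h2, ← h1])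
  have havne : av ≠ 0 := by
    intro h0
    have h1 : av * b = a * b - 2 * (k : K) := by
      rw [hav]; field_simp
    have h2 : a * b - 2 * (k : K)
        = φ ((Polynomial.X - Polynomial.C ((k + q₁ : ℕ) : ℝ)) * (Polynomial.X - Polynomial.C ((2 + q₂ : ℕ) : ℝ))
            - Polynomial.C ((2 * k : ℕ) : ℝ)) := by
      rw [map_sub, _root_.map_mul, ← x_sub_cast, ← x_sub_cast]
      rw [show x - ((k + q₁ : ℕ) : K) = a by rw [ha]; push_cast; ring]
      rw [show x - ((2 + q₂ : ℕ) : K) = b by rw [hb]; push_cast; ring]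
      rw [show φ (Polynomial.C ((2 * k : ℕ) : ℝ)) = 2 * (k : K) by
        rw [show φ (Polynomial.C ((2 * k : ℕ) : ℝ)) = ψ ((2 * k : ℕ) : ℝ) from rfl, map_natCast]
        push_cast; ring]
    rw [h0, zero_mul] at h1
    exact φ_ne_zero (quad_ne_zero _ _ _) (by rw [← h2, ← h1])
  have hψm : ((mm : ℕ) : K) = ψ ((mm : ℕ) : ℝ) := (map_natCast ψ mm).symm
  have hψn : ((nn : ℕ) : K) = ψ ((nn : ℕ) : ℝ) := (map_natCast ψ nn).symm
  -- matrices
  set LgK : Matrix V V K := (lapR G).map ψ with hLgK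
  set L1K : Matrix V₁ V₁ K := (lapR G₁).map ψ with hL1K
  set L2K : Matrix V₂ V₂ K := (lapR G₂).map ψ with hL2K
  set D1 : Matrix V₂ V₂ K := (x - (mm : K)) • 1 - L2K with hD1
  set D2 : Matrix V₁ V₁ K := (x - (nn : K)) • 1 - L1K with hD2
  set D3 : Matrix G.edgeSet G.edgeSet K := b • 1 - c₂ • Jm G.edgeSet G.edgeSet with hD3
  set U1 : Matrix (V ⊕ G.edgeSet) (V ⊕ G.edgeSet) K :=
    fromBlocks (a • 1) (BmK G) (CmK G) (b • 1) with hU1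
  set U2 : Matrix (V ⊕ G.edgeSet) (V ⊕ G.edgeSet) K :=
    fromBlocks (a • 1) (BmK G) (CmK G) D3 with hU2
  set U3 : Matrix (V ⊕ G.edgeSet) (V ⊕ G.edgeSet) K :=
    fromBlocks (a • 1 - c₁ • Jm V V) (BmK G) (CmK G) D3 with hU3
  set P2' : Matrix (V ⊕ G.edgeSet) V₁ K := P2mat (V₁ := V₁) G with hP2'
  set Q2' : Matrix V₁ (V ⊕ G.edgeSet) K := Q2mat (V₁ := V₁) G with hQ2'
  set P1' : Matrix ((V ⊕ G.edgeSet) ⊕ V₁) V₂ K := P1mat (V₁ := V₁) (V₂ := V₂) G with hP1'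
  set Q1' : Matrix V₂ ((V ⊕ G.edgeSet) ⊕ V₁) K := Q1mat (V₁ := V₁) (V₂ := V₂) G with hQ1'
  set T1 : Matrix (((V ⊕ G.edgeSet) ⊕ V₁)) (((V ⊕ G.edgeSet) ⊕ V₁)) K :=
    fromBlocks U1 P2' Q2' D2 with hT1
  have hdet1ne : D1.det ≠ 0 := by
    rw [hD1, hψm, hL2K]; exact det_shift_ne_zero _ _
  have hdet2ne : D2.det ≠ 0 := by
    rw [hD2, hψn, hL1K]; exact det_shift_ne_zero _ _
  haveI iD1 : Invertible D1 := D1.invertibleOfIsUnitDet (isUnit_iff_ne_zero.mpr hdet1ne)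
  haveI iD2 : Invertible D2 := D2.invertibleOfIsUnitDet (isUnit_iff_ne_zero.mpr hdet2ne)
  -- step 0: charpoly as determinant
  have step0 : φ (lapR (subdivisionDoubleJoin G G₁ G₂)).charpoly
      = (x • (1 : Matrix _ _ K) - (lapR (subdivisionDoubleJoin G G₁ G₂)).map ψ).det := by
    rw [φ_eq_eval, det_smul_one_sub_map]
  -- step 1: block decomposition
  have step1 : (x • (1 : Matrix _ _ K) - (lapR (subdivisionDoubleJoin G G₁ G₂)).map ψ).det
      = (fromBlocks T1 P1' Q1' D1).det := by
    rw [← Matrix.det_submatrix_equiv_self (σequiv G)]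
    congr 1
    ext i j
    rcases i with (((v | e) | u) | w) <;> rcases j with (((v' | e') | u') | w') <;>
      simp only [Matrix.submatrix_apply, σequiv, Equiv.coe_fn_mk, σf, Matrix.sub_apply,
        Matrix.smul_apply, Matrix.one_apply, Matrix.map_apply, hT1, hU1, hP1', hQ1', hP2', hQ2',
        Matrix.fromBlocks_apply₁₁, Matrix.fromBlocks_apply₁₂, Matrix.fromBlocks_apply₂₁,
        Matrix.fromBlocks_apply₂₂, BmK, CmK, P2mat, Q2mat, P1mat, Q1mat, Matrix.of_apply]
    · rw [L_VV G G₁ G₂ hreg]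
      by_cases h : v = v'
      · simp [h, ha, map_add, map_natCast]; rfl
      · simp [h]
    · rw [L_VE G G₁ G₂ v e']
      by_cases h : v ∈ (e' : Sym2 V) <;> simp [h]
    · rw [L_VV1 G G₁ G₂ v u']; simp
    · rw [L_VV2 G G₁ G₂ v w']; simp
    · rw [lapR_symm, L_VE G G₁ G₂ v' e]
      by_cases h : v' ∈ (e : Sym2 V) <;> simp [h]
    · rw [L_EE G G₁ G₂ e e']
      by_cases h : e = e'
      · simp [h, hb, map_add, map_natCast, map_ofNat]; rfl
      · simp [h]
    · rw [L_EV1 G G₁ G₂ e u']; simp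
    · rw [L_EV2 G G₁ G₂ e w']; simp
    · rw [lapR_symm, L_VV1 G G₁ G₂ v' u]; simp
    · rw [lapR_symm, L_EV1 G G₁ G₂ e' u]; simp
    · rw [L_V1V1 G G₁ G₂ u u']
      by_cases h : u = u'
      · simp [h, hD2, hL1K, map_add, map_natCast, Matrix.sub_apply, Matrix.smul_apply,
          Matrix.one_apply, Matrix.map_apply]
        ring
      · simp [h, hD2, hL1K, Matrix.sub_apply, Matrix.smul_apply, Matrix.one_apply,
          Matrix.map_apply]
    · rw [L_V1V2 G G₁ G₂ u w']; simp
    · rw [lapR_symm, L_VV2 G G₁ G₂ v' w]; simp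
    · rw [lapR_symm, L_EV2 G G₁ G₂ e' w]; simp
    · rw [lapR_symm, L_V1V2 G G₁ G₂ u' w]; simp
    · rw [L_V2V2 G G₁ G₂ w w']
      by_cases h : w = w'
      · simp [h, hD1, hL2K, map_add, map_natCast, Matrix.sub_apply, Matrix.smul_apply,
          Matrix.one_apply, Matrix.map_apply]
        rw [hmm, ← Nat.card_coe_set_eq, Nat.card_eq_fintype_card]
        ring
      · simp [h, hD1, hL2K, Matrix.sub_apply, Matrix.smul_apply, Matrix.one_apply,
          Matrix.map_apply]
  -- step 2: eliminate V₂
  have hP1D : P1' * D1 = (x - (mm : K)) • P1' := by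
    ext i w
    have hcs : ∑ w', D1 w' w = x - (mm : K) := by
      rw [hD1, hL2K]; exact colsum_D G₂ _ w
    rcases i with ((v | e) | u)
    · simp [hP1', P1mat, Matrix.mul_apply, Matrix.smul_apply]
    · simp only [hP1', P1mat, Matrix.mul_apply, Matrix.smul_apply, Matrix.of_apply, one_mul]
      rw [hcs]; simp
    · simp [hP1', P1mat, Matrix.mul_apply, Matrix.smul_apply]
  have hP1i : P1' * ⅟D1 = (x - (mm : K))⁻¹ • P1' := by
    have h := congrArg (fun M => M * ⅟D1) hP1D
    simp only [Matrix.mul_assoc, mul_invOf_self, Matrix.mul_one, Matrix.smul_mul] at h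
    have h2 := congrArg (fun M => (x - (mm : K))⁻¹ • M) h
    simp only [smul_smul, inv_mul_cancel₀ hxm, one_smul] at h2
    exact h2.symm
  have hcorr1 : T1 - P1' * ⅟D1 * Q1' = fromBlocks U2 P2' Q2' D2 := by
    rw [hP1i, Matrix.smul_mul]
    ext i j
    rcases i with ((v | e) | u) <;> rcases j with ((v' | e') | u') <;>
      simp only [hT1, hU1, hU2, hD3, hP1', hQ1', hP2', hQ2', Matrix.sub_apply, Matrix.smul_apply,
        Matrix.mul_apply, Matrix.fromBlocks_apply₁₁, Matrix.fromBlocks_apply₁₂,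
        Matrix.fromBlocks_apply₂₁, Matrix.fromBlocks_apply₂₂, P1mat, Q1mat, P2mat, Q2mat,
        Matrix.of_apply, Jm, Matrix.one_apply] <;>
      simp only [mul_zero, zero_mul, mul_one, one_mul, Finset.sum_const_zero, Finset.sum_const,
        Finset.card_univ, smul_eq_mul, sub_zero, nsmul_eq_mul, ← hq₂]
    all_goals
      first
        | ring
        | (rw [hc₂, div_eq_mul_inv]; ring)
  -- step 3: eliminate V₁
  have hP2D : P2' * D2 = (x - (nn : K)) • P2' := by
    ext i u
    have hcs : ∑ u', D2 u' u = x - (nn : K) := by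
      rw [hD2, hL1K]; exact colsum_D G₁ _ u
    rcases i with (v | e)
    · simp only [hP2', P2mat, Matrix.mul_apply, Matrix.smul_apply, Matrix.of_apply, one_mul]
      rw [hcs]; simp
    · simp [hP2', P2mat, Matrix.mul_apply, Matrix.smul_apply]
  have hP2i : P2' * ⅟D2 = (x - (nn : K))⁻¹ • P2' := by
    have h := congrArg (fun M => M * ⅟D2) hP2D
    simp only [Matrix.mul_assoc, mul_invOf_self, Matrix.mul_one, Matrix.smul_mul] at h
    have h2 := congrArg (fun M => (x - (nn : K))⁻¹ • M) h
    simp only [smul_smul, inv_mul_cancel₀ hxn, one_smul] at h2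
    exact h2.symm
  have hcorr2 : U2 - P2' * ⅟D2 * Q2' = U3 := by
    rw [hP2i, Matrix.smul_mul]
    ext i j
    rcases i with (v | e) <;> rcases j with (v' | e') <;>
      simp only [hU2, hU3, hP2', hQ2', Matrix.sub_apply, Matrix.smul_apply, Matrix.mul_apply,
        Matrix.fromBlocks_apply₁₁, Matrix.fromBlocks_apply₁₂, Matrix.fromBlocks_apply₂₁,
        Matrix.fromBlocks_apply₂₂, P2mat, Q2mat, Matrix.of_apply, Jm] <;>
      simp only [mul_zero, zero_mul, mul_one, one_mul, Finset.sum_const_zero, Finset.sum_const,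
        Finset.card_univ, smul_eq_mul, sub_zero, nsmul_eq_mul]
    all_goals
      first
        | ring
        | (rw [hc₁, div_eq_mul_inv]; ring)
  -- step 4: eliminate the subdivision vertices
  have hdet3 : D3.det = (b - c₂ * (mm : K)) * b ^ mm / b := by
    have h := det_smul_one_add_Jm_add G.edgeSet 0 (by simp) b (-c₂) hbne
    rw [add_zero, add_zero] at h
    rw [hD3, sub_eq_add_neg, ← neg_smul, h, Matrix.det_smul, Matrix.det_one, mul_one, ← hmm]
    ring
  have hdet3ne : D3.det ≠ 0 := by
    rw [hdet3]
    exact div_ne_zero (mul_ne_zero hbc (pow_ne_zero _ hbne)) hbne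
  haveI iD3 : Invertible D3 := D3.invertibleOfIsUnitDet (isUnit_iff_ne_zero.mpr hdet3ne)
  have hco : b * tt = c₂ * b⁻¹ + c₂ * ((mm : K) * tt) := by
    rw [htt]; field_simp; ring
  have hb1 : b * b⁻¹ = 1 := mul_inv_cancel₀ hbne
  have hD3i : ⅟D3 = b⁻¹ • (1 : Matrix G.edgeSet G.edgeSet K) + tt • Jm G.edgeSet G.edgeSet := by
    refine invOf_eq_right_inv ?_
    rw [hD3, Matrix.sub_mul, Matrix.mul_add, Matrix.mul_add]
    simp only [Matrix.smul_mul, Matrix.mul_smul, Matrix.one_mul, Matrix.mul_one, smul_smul,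
      Jm_mul_Jm, ← hmm]
    ext e f
    by_cases h : e = f
    · subst h
      simp [Matrix.sub_apply, Matrix.add_apply, Matrix.smul_apply, Matrix.one_apply, Jm]
      first
        | linear_combination hco + hb1
        | linear_combination hco
        | linear_combination hb1
        | ring
    · simp [h, Matrix.sub_apply, Matrix.add_apply, Matrix.smul_apply, Matrix.one_apply, Jm]
      first
        | linear_combination hco
        | linear_combination - hco
        | ring
  have hBC : BmK G * CmK G = (2 * (k : K)) • 1 - LgK := by
    ext u w
    by_cases h : u = w
    · subst h
      simp only [Matrix.mul_apply, BmK, CmK, Matrix.of_apply, Matrix.sub_apply, Matrix.smul_apply,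
        Matrix.one_apply_eq, Matrix.map_apply, hLgK, smul_eq_mul]
      have hterm : ∀ e : G.edgeSet,
          (if u ∈ (e : Sym2 V) then (1:K) else 0) * (if u ∈ (e : Sym2 V) then (1:K) else 0)
            = (if u ∈ (e : Sym2 V) then (1:K) else 0) := fun e => by
        by_cases he : u ∈ (e : Sym2 V) <;> simp [he]
      rw [Finset.sum_congr rfl fun e _ => hterm e, sum_inc_row G u, hreg u]
      have hdiag : lapR G u u = ((k : ℕ) : ℝ) := by
        rw [lapR_diag, sum_aind_degree, hreg u]
      rw [hdiag, map_natCast]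
      ring
    · simp only [Matrix.mul_apply, BmK, CmK, Matrix.of_apply, Matrix.sub_apply, Matrix.smul_apply,
        Matrix.one_apply_ne h, Matrix.map_apply, hLgK, lapR_off G h, smul_eq_mul]
      rw [sum_inc_two G h]
      by_cases hadj : G.Adj u w
      · rw [aind_pos hadj]; simp [hadj]
      · rw [aind_neg hadj]; simp [hadj]
  have hBJ : BmK G * Jm G.edgeSet G.edgeSet = (k : K) • Jm V G.edgeSet := by
    ext v e
    simp only [Matrix.mul_apply, BmK, Jm, Matrix.of_apply, mul_one, Matrix.smul_apply, smul_eq_mul]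
    rw [sum_inc_row G v, hreg v]
  have hJC : Jm V G.edgeSet * CmK G = (k : K) • Jm V V := by
    ext v w
    simp only [Matrix.mul_apply, CmK, Jm, Matrix.of_apply, one_mul, Matrix.smul_apply, smul_eq_mul]
    rw [sum_inc_row G w, hreg w]
    ring
  have hS : a • (1 : Matrix V V K) - c₁ • Jm V V - BmK G * ⅟D3 * CmK G
      = av • 1 + (-bv) • Jm V V + b⁻¹ • LgK := by
    rw [hD3i, Matrix.mul_add, Matrix.add_mul]
    rw [Matrix.mul_smul, Matrix.mul_one, Matrix.smul_mul, hBC]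
    rw [Matrix.mul_smul, Matrix.smul_mul, hBJ, Matrix.smul_mul, hJC]
    ext v w
    by_cases h : v = w <;>
      simp [h, hav, hbv, Matrix.sub_apply, Matrix.add_apply, Matrix.smul_apply, Matrix.one_apply,
        Jm] <;>
      first
        | ring
        | (field_simp; ring)
  have hcolsum : ∀ j, ∑ i, (b⁻¹ • LgK) i j = 0 := by
    intro j
    simp only [Matrix.smul_apply, hLgK, Matrix.map_apply, smul_eq_mul]
    rw [← Finset.mul_sum, ← map_sum, lapR_colsum, map_zero, mul_zero]
  have hdetS : (av • (1 : Matrix V V K) + (-bv) • Jm V V + b⁻¹ • LgK).det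
      = (av + (-bv) * (nn : K)) / av * ((av • (1 : Matrix V V K) + b⁻¹ • LgK)).det := by
    have h := det_smul_one_add_Jm_add V (b⁻¹ • LgK) hcolsum av (-bv) havne
    rw [h, ← hnn]
  have hfin1 : av • (1 : Matrix V V K) + b⁻¹ • LgK
      = (-b⁻¹) • ((2 * (k : K) - a * b) • 1 - LgK) := by
    have hsc : av = -b⁻¹ * (2 * (k : K) - a * b) := by
      rw [hav]; field_simp <;> ring
    ext v w
    by_cases h : v = w <;>
      simp [h, hsc, Matrix.sub_apply, Matrix.add_apply, Matrix.smul_apply, Matrix.one_apply, Jm] <;>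
      ring
  have hdetA : ((-b⁻¹) • ((2 * (k : K) - a * b) • (1 : Matrix V V K) - LgK)).det
      = (-b⁻¹) ^ nn * (((lapR G).charpoly.map ψ).eval (2 * (k : K) - a * b)) := by
    rw [Matrix.det_smul, hLgK, det_smul_one_sub_map, ← hnn]
  have hdetD1 : D1.det = ((lapR G₂).charpoly.map ψ).eval (x - (mm : K)) := by
    rw [hD1, hL2K, det_smul_one_sub_map]
  have hdetD2 : D2.det = ((lapR G₁).charpoly.map ψ).eval (x - (nn : K)) := by
    rw [hD2, hL1K, det_smul_one_sub_map]
  -- assemble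
  rw [step0, step1, Matrix.det_fromBlocks₂₂, hcorr1, Matrix.det_fromBlocks₂₂, hcorr2, hU3,
    Matrix.det_fromBlocks₂₂, hS, hdetS, hfin1, hdetA, hdetD1, hdetD2, hdet3]
  simp only [formula]
  rw [← ha, ← hb, ← hc₁, ← hc₂, ← htt, ← hav, ← hbv]
  ring

end SDJ

theorem stmt_19 {V V' V₁ V₁' V₂ V₂' : Type*}
    [Fintype V] [DecidableEq V] [Fintype V'] [DecidableEq V']
    [Fintype V₁] [DecidableEq V₁] [Fintype V₁'] [DecidableEq V₁']
    [Fintype V₂] [DecidableEq V₂] [Fintype V₂'] [DecidableEq V₂']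
    (G : SimpleGraph V) [DecidableRel G.Adj] [Fintype G.edgeSet]
    (H : SimpleGraph V') [DecidableRel H.Adj] [Fintype H.edgeSet]
    (G₁ : SimpleGraph V₁) (H₁ : SimpleGraph V₁') (G₂ : SimpleGraph V₂) (H₂ : SimpleGraph V₂')
    (k : ℕ) (hregG : G.IsRegularOfDegree k) (hregH : H.IsRegularOfDegree k)
    (hn : Fintype.card V = Fintype.card V')
    (hm : Fintype.card G.edgeSet = Fintype.card H.edgeSet)
    (h : IsLapCospectral G H) (h₁ : IsLapCospectral G₁ H₁) (h₂ : IsLapCospectral G₂ H₂) :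
    IsLapCospectral (subdivisionDoubleJoin G G₁ G₂) (subdivisionDoubleJoin H H₁ H₂) := by
  unfold IsLapCospectral at h h₁ h₂ ⊢
  apply SDJ.φ_inj
  have e₁ : Fintype.card V₁ = Fintype.card V₁' := by
    have := congrArg Polynomial.natDegree h₁
    rwa [Matrix.charpoly_natDegree_eq_dim, Matrix.charpoly_natDegree_eq_dim] at this
  have e₂ : Fintype.card V₂ = Fintype.card V₂' := by
    have := congrArg Polynomial.natDegree h₂
    rwa [Matrix.charpoly_natDegree_eq_dim, Matrix.charpoly_natDegree_eq_dim] at this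
  rw [SDJ.main G G₁ G₂ k hregG, SDJ.main H H₁ H₂ k hregH, h, h₁, h₂, hn, hm, e₁, e₂]
end
end
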